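/- arXiv:math/0404090 — 5 statements merged into one kernel-verified Lean document; each statement's English description precedes it below -/
import Mathlib

section
/- Let f be a probability generating function with mean f'(1) = m > 1 and infinite second factorial moment f''(1) = ∞. Then there exists a sequence of numbers p_n with 0 < p_n ≤ 1 such that (i) ∑_{n=1}^∞ ∏_{k=1}^n (m·p_k)^{-1} < ∞, and (ii) setting f_n(z) = f(1 − p_n + p_n z), the iterated compositions satisfy lim_{n→∞} (f_1 ∘ f_2 ∘ ⋯ ∘ f_n)(0) = 1. -/
open Filter

/-- `pgfCompSeq f n` is the composition `f 0 ∘ f 1 ∘ ⋯ ∘ f (n-1)` (so the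
first function `f 0` is outermost); it plays the role of `f_1 ∘ ⋯ ∘ f_n`. -/
def pgfCompSeq (f : ℕ → ℝ → ℝ) : ℕ → ℝ → ℝ
  | 0 => id
  | n + 1 => fun z => pgfCompSeq f n (f n z)

/-!
Write `f (1 - s) = 1 - s S(s)`: the slope `S` (`pgfSlope`) decreases from `S(0) = m`, and
`f''(1) = ∞` means that `m - S(s)` is not `O(s)` as `s → 0`. The sequence `p` is built in
segments. In segment `r`, a run of steps with `p = 1` raises the mean product `∏ m p_k` to some
large `B`, then a run with `m p = 1 + ε`, `ε = 2^r / B`, contributes at most `1 / (ε B) = 2^{-r}`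
to the series. Put `η = 2^{-r} / B`. Since `m - S(η / m) ≥ 2 m ε` once `B` is large (this is
where `f''(1) = ∞` is used), each step of the second run multiplies `1 - z` by at most `1 - ε`
as long as `1 - z ≥ η`, so after a long enough run `1 - z ≤ 2 η`. The earlier steps multiply this
by at most `B`, hence `1 - (f_1 ∘ ⋯ ∘ f_n)(0) ≤ 2^{1-r}` after segment `r`.
-/

open Finset Topology

noncomputable def pgf (q : ℕ → ℝ) (z : ℝ) : ℝ := ∑' j, q j * z ^ j

/-- The secant slope `(1 - f (1 - s)) / s` of the generating function `f` at `1`,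
written as a series so that it makes sense at `s = 0`, where it equals `f'(1)`. -/
noncomputable def pgfSlope (q : ℕ → ℝ) (s : ℝ) : ℝ := ∑' j, q j * ∑ i ∈ range j, (1 - s) ^ i

theorem sum_range_natCast_mul_two (n : ℕ) : (∑ i ∈ range n, (i : ℝ)) * 2 = n * (n - 1) := by
  induction n with
  | zero => simp
  | succ n ih => rw [sum_range_succ, add_mul, ih]; push_cast; ring

section pgf

variable {q : ℕ → ℝ} {m : ℝ}

theorem pgf_mem_Icc (hq : ∀ k, 0 ≤ q k) (hq1 : HasSum q 1) {z : ℝ} (hz : z ∈ Set.Icc 0 1) :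
    pgf q z ∈ Set.Icc 0 1 := by
  have hle : ∀ j, q j * z ^ j ≤ q j :=
    fun j => mul_le_of_le_one_right (hq j) (pow_le_one₀ hz.1 hz.2)
  have hnn : ∀ j, 0 ≤ q j * z ^ j := fun j => mul_nonneg (hq j) (pow_nonneg hz.1 j)
  have hsum : Summable fun j => q j * z ^ j := .of_nonneg_of_le hnn hle hq1.summable
  exact ⟨tsum_nonneg hnn, hq1.tsum_eq ▸ hsum.tsum_le_tsum hle hq1.summable⟩

theorem geom_sum_one_sub_le {s : ℝ} (hs : s ∈ Set.Icc (0 : ℝ) 1) (j : ℕ) :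
    ∑ i ∈ range j, (1 - s) ^ i ≤ j := by
  simpa using sum_le_sum fun i (_ : i ∈ range j) =>
    pow_le_one₀ (M₀ := ℝ) (sub_nonneg.2 hs.2) (sub_le_self 1 hs.1)

theorem hasSum_pgfSlope (hq : ∀ k, 0 ≤ q k) (hm : HasSum (fun k : ℕ => (k : ℝ) * q k) m)
    {s : ℝ} (hs : s ∈ Set.Icc 0 1) :
    HasSum (fun j => q j * ∑ i ∈ range j, (1 - s) ^ i) (pgfSlope q s) := by
  refine (Summable.of_nonneg_of_le (fun j => ?_) (fun j => ?_) hm.summable).hasSum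
  · exact mul_nonneg (hq j) (sum_nonneg fun i _ => pow_nonneg (by linarith [hs.2]) i)
  · rw [mul_comm (j : ℝ)]
    exact mul_le_mul_of_nonneg_left (geom_sum_one_sub_le hs j) (hq j)

theorem pgfSlope_le (hq : ∀ k, 0 ≤ q k) (hm : HasSum (fun k : ℕ => (k : ℝ) * q k) m)
    {s : ℝ} (hs : s ∈ Set.Icc 0 1) : pgfSlope q s ≤ m :=
  hasSum_le (fun j => by
    rw [mul_comm (j : ℝ)]; exact mul_le_mul_of_nonneg_left (geom_sum_one_sub_le hs j) (hq j))
    (hasSum_pgfSlope hq hm hs) hm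

theorem antitoneOn_pgfSlope (hq : ∀ k, 0 ≤ q k)
    (hm : HasSum (fun k : ℕ => (k : ℝ) * q k) m) :
    AntitoneOn (pgfSlope q) (Set.Icc 0 1) := fun s hs t ht hst =>
  hasSum_le (fun j => mul_le_mul_of_nonneg_left (sum_le_sum fun i _ =>
      pow_le_pow_left₀ (by linarith [ht.2]) (by linarith) i) (hq j))
    (hasSum_pgfSlope hq hm ht) (hasSum_pgfSlope hq hm hs)

theorem one_sub_pgf_one_sub (hq : ∀ k, 0 ≤ q k) (hq1 : HasSum q 1)
    (hm : HasSum (fun k : ℕ => (k : ℝ) * q k) m) {s : ℝ} (hs : s ∈ Set.Icc 0 1) :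
    1 - pgf q (1 - s) = s * pgfSlope q s := by
  have h := hq1.sub ((hasSum_pgfSlope hq hm hs).mul_left s)
  have hterm : ∀ j, q j - s * (q j * ∑ i ∈ range j, (1 - s) ^ i) = q j * (1 - s) ^ j := by
    intro j
    linear_combination -q j * mul_neg_geom_sum (1 - s) j
  simp only [hterm] at h
  rw [pgf, h.tsum_eq]
  ring

theorem hasSum_sub_pgfSlope (hq : ∀ k, 0 ≤ q k) (hm : HasSum (fun k : ℕ => (k : ℝ) * q k) m)
    {s : ℝ} (hs : s ∈ Set.Icc 0 1) :
    HasSum (fun j => q j * ∑ i ∈ range j, (1 - (1 - s) ^ i)) (m - pgfSlope q s) := by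
  refine (hm.sub (hasSum_pgfSlope hq hm hs)).congr_fun fun j => ?_
  simp only [sum_sub_distrib, sum_const, card_range, nsmul_eq_mul, mul_one]
  ring

theorem eventually_mul_le_sub_pgfSlope (hq : ∀ k, 0 ≤ q k)
    (hm : HasSum (fun k : ℕ => (k : ℝ) * q k) m)
    (hvar : ¬ Summable (fun k : ℕ => (k : ℝ) * ((k : ℝ) - 1) * q k)) (C : ℝ) :
    ∀ᶠ s in 𝓝[>] 0, C * s ≤ m - pgfSlope q s := by
  set g : ℕ → ℝ → ℝ :=
    fun J s => ∑ j ∈ range J, q j * ∑ i ∈ range j, ∑ l ∈ range i, (1 - s) ^ l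
  have hg0 : Tendsto (fun J => g J 0) atTop atTop := by
    have hnn : ∀ j, 0 ≤ q j * ∑ i ∈ range j, (i : ℝ) :=
      fun j => mul_nonneg (hq j) (sum_nonneg fun i _ => i.cast_nonneg)
    refine ((not_summable_iff_tendsto_nat_atTop_of_nonneg hnn).1 fun h => hvar ?_).congr
      fun J => by simp [g]
    refine (h.mul_left 2).congr fun j => ?_
    linear_combination q j * sum_range_natCast_mul_two j
  obtain ⟨J, hJ⟩ := (hg0.eventually_gt_atTop C).exists
  have hcont : Continuous (g J) := by fun_prop
  filter_upwards [nhdsWithin_le_nhds ((hcont.tendsto 0).eventually_const_lt hJ),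
    Ioo_mem_nhdsGT one_pos] with s hCs hs
  have hs' : s ∈ Set.Icc 0 1 := ⟨hs.1.le, hs.2.le⟩
  have hgeom : ∀ i, 1 - (1 - s) ^ i = s * ∑ l ∈ range i, (1 - s) ^ l := fun i => by
    simpa using (mul_neg_geom_sum (1 - s) i).symm
  calc C * s ≤ s * g J s := by rw [mul_comm]; exact mul_le_mul_of_nonneg_left hCs.le hs.1.le
    _ = ∑ j ∈ range J, q j * ∑ i ∈ range j, (1 - (1 - s) ^ i) := by
      simp only [g, hgeom, mul_sum]
      refine sum_congr rfl fun j _ => sum_congr rfl fun i _ => ?_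
      exact sum_congr rfl fun l _ => by ring
    _ ≤ m - pgfSlope q s := sum_le_hasSum _ (fun j _ => mul_nonneg (hq j) (sum_nonneg
        fun i _ => sub_nonneg.2 (pow_le_one₀ (by linarith [hs.2]) (by linarith [hs.1]))))
      (hasSum_sub_pgfSlope hq hm hs')

end pgf

theorem one_sub_iterate_le_max {φ : ℝ → ℝ} {θ c η : ℝ} (hθ : θ ∈ Set.Icc 0 1)
    (hcη : 0 ≤ c * η) (hφ : Set.MapsTo φ (Set.Icc 0 1) (Set.Icc 0 1))
    (hfar : ∀ y ∈ Set.Icc (0 : ℝ) 1, η ≤ 1 - y → 1 - φ y ≤ θ * (1 - y))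
    (hnear : ∀ y ∈ Set.Icc (0 : ℝ) 1, 1 - y < η → 1 - φ y ≤ c * η) (n : ℕ) {z : ℝ}
    (hz : z ∈ Set.Icc 0 1) : 1 - φ^[n] z ≤ max (θ ^ n) (c * η) := by
  induction n with
  | zero => exact le_max_of_le_left (by simp [hz.1])
  | succ n ih =>
    have hy := hφ.iterate n hz
    rw [Function.iterate_succ_apply']
    rcases le_or_gt η (1 - φ^[n] z) with hfar' | hnear'
    · calc 1 - φ (φ^[n] z) ≤ θ * (1 - φ^[n] z) := hfar _ hy hfar'
        _ ≤ θ * max (θ ^ n) (c * η) := mul_le_mul_of_nonneg_left ih hθ.1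
        _ = max (θ ^ (n + 1)) (θ * (c * η)) := by rw [mul_max_of_nonneg _ _ hθ.1, pow_succ']
        _ ≤ max (θ ^ (n + 1)) (c * η) := max_le_max le_rfl (mul_le_of_le_one_left hcη hθ.2)
    · exact le_max_of_le_right (hnear _ hy hnear')

noncomputable def thinPgf (q : ℕ → ℝ) (P z : ℝ) : ℝ := pgf q (1 - P + P * z)

section thin

variable {q : ℕ → ℝ} {m : ℝ}

theorem mapsTo_thinPgf (hq : ∀ k, 0 ≤ q k) (hq1 : HasSum q 1) {P : ℝ}
    (hP : P ∈ Set.Icc 0 1) : Set.MapsTo (thinPgf q P) (Set.Icc 0 1) (Set.Icc 0 1) := fun z hz =>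
  pgf_mem_Icc hq hq1 ⟨by nlinarith [hP.1, hP.2, hz.1], by nlinarith [hP.1, hz.2]⟩

theorem one_sub_thinPgf (hq : ∀ k, 0 ≤ q k) (hq1 : HasSum q 1)
    (hm : HasSum (fun k : ℕ => (k : ℝ) * q k) m) {P z : ℝ} (hP : P ∈ Set.Icc 0 1)
    (hz : z ∈ Set.Icc 0 1) :
    1 - thinPgf q P z = P * (1 - z) * pgfSlope q (P * (1 - z)) := by
  have hs : P * (1 - z) ∈ Set.Icc 0 1 :=
    ⟨by nlinarith [hP.1, hz.2], by nlinarith [hP.1, hP.2, hz.1]⟩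
  rw [thinPgf, ← one_sub_pgf_one_sub hq hq1 hm hs]
  ring_nf

theorem one_sub_thinPgf_le (hq : ∀ k, 0 ≤ q k) (hq1 : HasSum q 1)
    (hm : HasSum (fun k : ℕ => (k : ℝ) * q k) m) {P z : ℝ} (hP : P ∈ Set.Icc 0 1)
    (hz : z ∈ Set.Icc 0 1) : 1 - thinPgf q P z ≤ m * P * (1 - z) := by
  have hs : P * (1 - z) ∈ Set.Icc 0 1 :=
    ⟨by nlinarith [hP.1, hz.2], by nlinarith [hP.1, hP.2, hz.1]⟩
  rw [one_sub_thinPgf hq hq1 hm hP hz]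
  nlinarith [pgfSlope_le hq hm hs, hs.1]

theorem one_sub_iterate_thinPgf_le (hq : ∀ k, 0 ≤ q k) (hq1 : HasSum q 1)
    (hm : HasSum (fun k : ℕ => (k : ℝ) * q k) m) {ε η : ℝ} (hε : ε ∈ Set.Icc 0 1)
    (hεm : 1 + ε ≤ m) (hη : 0 ≤ η) (hslope : pgfSlope q (η / m) ≤ m * (1 - 2 * ε)) (n : ℕ)
    {z : ℝ} (hz : z ∈ Set.Icc 0 1) :
    1 - (thinPgf q ((1 + ε) / m))^[n] z ≤ max ((1 - ε) ^ n) ((1 + ε) * η) := by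
  have hm0 : 0 < m := by linarith [hε.1]
  set P := (1 + ε) / m
  have hP : P ∈ Set.Icc 0 1 := ⟨by positivity [hε.1], (div_le_one hm0).2 hεm⟩
  have hmP : m * P = 1 + ε := mul_div_cancel₀ _ hm0.ne'
  refine one_sub_iterate_le_max ⟨by linarith [hε.2], by linarith [hε.1]⟩
    (by nlinarith [hε.1]) (mapsTo_thinPgf hq hq1 hP) (fun y hy hfar => ?_)
    (fun y hy hnear => ?_) n hz
  · have hs : P * (1 - y) ∈ Set.Icc 0 1 :=
      ⟨by nlinarith [hP.1, hy.2], by nlinarith [hP.1, hP.2, hy.1]⟩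
    have hηs : η / m ≤ P * (1 - y) := by
      rw [div_le_iff₀ hm0, mul_assoc, mul_comm, mul_assoc, mul_comm (1 - y), hmP]
      nlinarith [hε.1]
    have hS :=
      (antitoneOn_pgfSlope hq hm ⟨by positivity, hηs.trans hs.2⟩ hs hηs).trans hslope
    rw [one_sub_thinPgf hq hq1 hm hP hy]
    calc P * (1 - y) * pgfSlope q (P * (1 - y)) ≤ P * (1 - y) * (m * (1 - 2 * ε)) :=
          mul_le_mul_of_nonneg_left hS hs.1
      _ = (1 + ε) * (1 - 2 * ε) * (1 - y) := by rw [← hmP]; ring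
      _ ≤ (1 - ε) * (1 - y) := by
          nlinarith [mul_nonneg (sq_nonneg ε) (sub_nonneg.2 hy.2)]
  · calc 1 - thinPgf q P y ≤ m * P * (1 - y) := one_sub_thinPgf_le hq hq1 hm hP hy
      _ ≤ (1 + ε) * η := by rw [hmP]; nlinarith [hε.1]

end thin

section comp

variable {F : ℕ → ℝ → ℝ}

theorem mapsTo_pgfCompSeq (hF : ∀ k, Set.MapsTo (F k) (Set.Icc 0 1) (Set.Icc 0 1)) (n : ℕ) :
    Set.MapsTo (pgfCompSeq F n) (Set.Icc 0 1) (Set.Icc 0 1) := by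
  induction n with
  | zero => exact Set.mapsTo_id _
  | succ n ih => exact fun z hz => ih (hF n hz)

theorem one_sub_pgfCompSeq_le {c : ℕ → ℝ} (hc : ∀ k, 0 ≤ c k)
    (hF : ∀ k, Set.MapsTo (F k) (Set.Icc 0 1) (Set.Icc 0 1))
    (hlip : ∀ k, ∀ z ∈ Set.Icc (0 : ℝ) 1, 1 - F k z ≤ c k * (1 - z)) (n : ℕ) {z : ℝ}
    (hz : z ∈ Set.Icc 0 1) : 1 - pgfCompSeq F n z ≤ (∏ k ∈ range n, c k) * (1 - z) := by
  induction n generalizing z with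
  | zero => simp [pgfCompSeq]
  | succ n ih =>
    calc 1 - pgfCompSeq F n (F n z) ≤ (∏ k ∈ range n, c k) * (1 - F n z) := ih (hF n hz)
      _ ≤ (∏ k ∈ range n, c k) * (c n * (1 - z)) :=
        mul_le_mul_of_nonneg_left (hlip n z hz) (prod_nonneg fun k _ => hc k)
      _ = (∏ k ∈ range (n + 1), c k) * (1 - z) := by rw [prod_range_succ]; ring

theorem pgfCompSeq_add (a b : ℕ) (z : ℝ) :
    pgfCompSeq F (a + b) z = pgfCompSeq F a (pgfCompSeq (fun k => F (a + k)) b z) := by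
  induction b generalizing z with
  | zero => rfl
  | succ b ih => exact ih (F (a + b) z)

theorem pgfCompSeq_eq_iterate {φ : ℝ → ℝ} {n : ℕ} (hF : ∀ k < n, F k = φ) (z : ℝ) :
    pgfCompSeq F n z = φ^[n] z := by
  induction n generalizing z with
  | zero => rfl
  | succ n ih =>
    exact (congrArg (pgfCompSeq F n) (congrFun (hF n n.lt_succ_self) z)).trans
      (ih (fun k hk => hF k (hk.trans n.lt_succ_self)) (φ z))

end comp

theorem prod_range_add_eq_mul_pow {M : Type*} [CommMonoid M] {f : ℕ → M} {a n : ℕ} {c : M}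
    (hf : ∀ j < n, f (a + j) = c) :
    ∏ i ∈ range (a + n), f i = (∏ i ∈ range a, f i) * c ^ n := by
  rw [prod_range_add, prod_congr rfl fun j hj => hf j (mem_range.1 hj), prod_const, card_range]

theorem sum_Ico_inv_prod_le {f : ℕ → ℝ} {a n : ℕ} {c : ℝ} (hc : 1 < c)
    (hf : ∀ j < n, f (a + j) = c) (hpos : 0 ≤ ∏ i ∈ range a, f i) :
    ∑ i ∈ Ico a (a + n), (∏ j ∈ range (i + 1), f j)⁻¹
      ≤ (∏ i ∈ range a, f i)⁻¹ * (c - 1)⁻¹ := by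
  have hc0 : 0 < c := by linarith
  calc ∑ i ∈ Ico a (a + n), (∏ j ∈ range (i + 1), f j)⁻¹
      = (∏ i ∈ range a, f i)⁻¹ * ∑ j ∈ Ico 1 (n + 1), c⁻¹ ^ j := by
        rw [sum_Ico_eq_sum_range, sum_Ico_eq_sum_range, mul_sum]
        refine sum_congr (by simp) fun j hj => ?_
        rw [add_assoc, prod_range_add_eq_mul_pow fun i hi => hf i (by simp at hj; omega),
          mul_inv, inv_pow, add_comm 1 j]
    _ ≤ (∏ i ∈ range a, f i)⁻¹ * (c - 1)⁻¹ := by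
        refine mul_le_mul_of_nonneg_left ?_ (inv_nonneg.2 hpos)
        refine (geom_sum_Ico_le_of_lt_one (by positivity)
          (inv_lt_one_of_one_lt₀ hc)).trans_eq ?_
        field_simp

theorem summable_of_sum_Ico_le {a b : ℕ → ℝ} {N : ℕ → ℕ} (ha : ∀ n, 0 ≤ a n)
    (hN : StrictMono N) (hN0 : N 0 = 0) (hb : Summable b)
    (hab : ∀ r, ∑ i ∈ Ico (N r) (N (r + 1)), a i ≤ b r) : Summable a := by
  have hb0 : ∀ r, 0 ≤ b r := fun r => (sum_nonneg fun i _ => ha i).trans (hab r)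
  have hpart : ∀ r, ∑ i ∈ range (N r), a i ≤ ∑ s ∈ range r, b s := by
    intro r
    induction r with
    | zero => simp [hN0]
    | succ r ih =>
      rw [← sum_range_add_sum_Ico _ (hN r.lt_succ_self).le, sum_range_succ]
      exact add_le_add ih (hab r)
  refine summable_of_sum_range_le (c := ∑' s, b s) ha fun n => ?_
  calc ∑ i ∈ range n, a i ≤ ∑ i ∈ range (N n), a i :=
        sum_le_sum_of_subset_of_nonneg (range_subset_range.2 (hN.id_le n)) fun i _ _ => ha i
    _ ≤ ∑ s ∈ range n, b s := hpart n
    _ ≤ ∑' s, b s := hb.sum_le_tsum _ fun s _ => hb0 s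

theorem exists_eq_on_segments {α : Type*} {S : Set α} (hS : S.Nonempty) (ℓ : ℕ → ℕ)
    {v : ℕ → ℕ → α} (hv : ∀ r j, v r j ∈ S) :
    ∃ p : ℕ → α, (∀ n, p n ∈ S) ∧ ∀ r, ∀ j < ℓ r, p (∑ i ∈ range r, ℓ i + j) = v r j := by
  classical
  set N : ℕ → ℕ := fun r => ∑ i ∈ range r, ℓ i
  have hN : Monotone N := fun r r' h => sum_le_sum_of_subset (range_subset_range.2 h)
  have hlt : ∀ {r r' j j'}, j < ℓ r → r < r' → N r + j < N r' + j' :=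
    fun {r r' j j'} hj h =>
    calc N r + j < N (r + 1) := by simp only [N, sum_range_succ]; omega
      _ ≤ N r' + j' := (hN h).trans (Nat.le_add_right _ _)
  have huniq :
      ∀ {r r' j j'}, j < ℓ r → j' < ℓ r' → N r + j = N r' + j' → r = r' ∧ j = j' := by
    intro r r' j j' hj hj' h
    rcases lt_trichotomy r r' with hr | rfl | hr
    · exact absurd h (hlt hj hr).ne
    · omega
    · exact absurd h.symm (hlt hj' hr).ne
  refine ⟨fun n => if h : ∃ rj : ℕ × ℕ, rj.2 < ℓ rj.1 ∧ N rj.1 + rj.2 = n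
      then v h.choose.1 h.choose.2 else hS.some, fun n => ?_, fun r j hj => ?_⟩
  · dsimp only
    split_ifs
    exacts [hv _ _, hS.some_mem]
  · have h : ∃ rj : ℕ × ℕ, rj.2 < ℓ rj.1 ∧ N rj.1 + rj.2 = N r + j := ⟨(r, j), hj, rfl⟩
    obtain ⟨h1, h2⟩ := huniq h.choose_spec.1 hj h.choose_spec.2
    change dite _ _ _ = _
    rw [dif_pos h, h1, h2]

section schedule

variable {q : ℕ → ℝ} {m : ℝ}

theorem eventually_block_conditions (hq : ∀ k, 0 ≤ q k)
    (hm : HasSum (fun k : ℕ => (k : ℝ) * q k) m) (hm1 : 1 < m)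
    (hvar : ¬ Summable (fun k : ℕ => (k : ℝ) * ((k : ℝ) - 1) * q k)) (r : ℕ) :
    ∀ᶠ B in atTop, 2 ^ r / B ≤ 1 / 2 ∧ 1 + 2 ^ r / B ≤ m ∧
      pgfSlope q ((2 ^ r)⁻¹ / B / m) ≤ m * (1 - 2 * (2 ^ r / B)) := by
  have hm0 : 0 < m := by linarith
  have hε : Tendsto (fun B : ℝ => 2 ^ r / B) atTop (𝓝 0) :=
    tendsto_const_nhds.div_atTop tendsto_id
  have hs : Tendsto (fun B : ℝ => ((2 ^ r * m) * B)⁻¹) atTop (𝓝[>] 0) :=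
    tendsto_inv_atTop_nhdsGT_zero.comp (tendsto_id.const_mul_atTop (by positivity))
  filter_upwards [eventually_gt_atTop 0, hε.eventually (ge_mem_nhds one_half_pos),
    hε.eventually (ge_mem_nhds (sub_pos.2 hm1)),
    hs.eventually (eventually_mul_le_sub_pgfSlope hq hm hvar (2 * m ^ 2 * 4 ^ r))]
    with B hB hε2 hεm hgap
  refine ⟨hε2, by linarith, ?_⟩
  have h4 : (4 : ℝ) ^ r = 2 ^ r * 2 ^ r := by rw [← mul_pow]; norm_num
  have hC : 2 * m ^ 2 * 4 ^ r * ((2 ^ r * m) * B)⁻¹ = m * (2 * (2 ^ r / B)) := by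
    rw [h4]; field_simp
  rw [show (2 ^ r)⁻¹ / B / m = ((2 ^ r * m) * B)⁻¹ by field_simp]
  linarith

theorem exists_segment (hq : ∀ k, 0 ≤ q k) (hm : HasSum (fun k : ℕ => (k : ℝ) * q k) m)
    (hm1 : 1 < m) (hvar : ¬ Summable (fun k : ℕ => (k : ℝ) * ((k : ℝ) - 1) * q k)) (r : ℕ)
    (E : ℝ) (hE : 0 < E) :
    ∃ (k L : ℕ) (ε η : ℝ), ε * (E * m ^ k) = 2 ^ r ∧ η * (E * m ^ k) = (2 ^ r)⁻¹ ∧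
      0 < ε ∧ ε ≤ 1 / 2 ∧ 1 + ε ≤ m ∧ 0 < η ∧ pgfSlope q (η / m) ≤ m * (1 - 2 * ε) ∧
      0 < L ∧ (1 - ε) ^ L ≤ η := by
  obtain ⟨k, hε2, hεm, hslope⟩ :=
    ((tendsto_pow_atTop_atTop_of_one_lt hm1).const_mul_atTop hE).eventually
      (eventually_block_conditions hq hm hm1 hvar r) |>.exists
  set B := E * m ^ k
  have hB : 0 < B := by positivity
  have hε : 0 < 2 ^ r / B := by positivity
  have hη : 0 < (2 ^ r)⁻¹ / B := by positivity
  obtain ⟨L, hL, hL0⟩ := ((tendsto_pow_atTop_nhds_zero_of_lt_one (r := 1 - 2 ^ r / B)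
    (by linarith) (by linarith)).eventually (gt_mem_nhds hη)).and (eventually_gt_atTop 0)
    |>.exists
  exact ⟨k, L, 2 ^ r / B, (2 ^ r)⁻¹ / B, div_mul_cancel₀ _ hB.ne', div_mul_cancel₀ _ hB.ne',
    hε, hε2, hεm, hη, hslope, hL0, hL.le⟩

end schedule

/-- A sequence `p` cut into segments `[N r, N (r + 1))`: `k r` steps with `p = 1`, after which
the mean product `∏ m p` has reached `B r`, then `L r` steps with `p = (1 + ε r) / m`. -/
structure BlockSchedule (q : ℕ → ℝ) (m : ℝ) where
  p : ℕ → ℝ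
  N : ℕ → ℕ
  k : ℕ → ℕ
  L : ℕ → ℕ
  B : ℕ → ℝ
  ε : ℕ → ℝ
  η : ℕ → ℝ
  p_mem : ∀ n, p n ∈ Set.Ioc 0 1
  N_zero : N 0 = 0
  N_succ : ∀ r, N (r + 1) = N r + k r + L r
  L_pos : ∀ r, 0 < L r
  p_boost : ∀ r, ∀ j < k r, p (N r + j) = 1
  p_block : ∀ r, ∀ j < L r, p (N r + k r + j) = (1 + ε r) / m
  prod_eq : ∀ r, ∏ i ∈ range (N r + k r), m * p i = B r
  ε_mul_B : ∀ r, ε r * B r = 2 ^ r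
  η_mul_B : ∀ r, η r * B r = (2 ^ r)⁻¹
  ε_pos : ∀ r, 0 < ε r
  ε_le_half : ∀ r, ε r ≤ 1 / 2
  one_add_ε_le : ∀ r, 1 + ε r ≤ m
  η_pos : ∀ r, 0 < η r
  pgfSlope_le : ∀ r, pgfSlope q (η r / m) ≤ m * (1 - 2 * ε r)
  pow_L_le : ∀ r, (1 - ε r) ^ L r ≤ η r

theorem nonempty_blockSchedule {q : ℕ → ℝ} {m : ℝ} (hq : ∀ k, 0 ≤ q k)
    (hm : HasSum (fun k : ℕ => (k : ℝ) * q k) m) (hm1 : 1 < m)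
    (hvar : ¬ Summable (fun k : ℕ => (k : ℝ) * ((k : ℝ) - 1) * q k)) :
    Nonempty (BlockSchedule q m) := by
  have hm0 : 0 < m := by linarith
  choose! k L ε η hεB hηB hε hε2 hεm hη hslope hL hεL using exists_segment hq hm hm1 hvar
  -- `E r` is the mean product at the start of segment `r`
  let E : ℕ → ℝ := fun r => Nat.rec 1 (fun r e => e * m ^ k r e * (1 + ε r e) ^ L r e) r
  have hE : ∀ r, 0 < E r := fun r => by
    induction r with
    | zero => exact one_pos
    | succ r ih =>
      exact mul_pos (mul_pos ih (pow_pos hm0 _)) (pow_pos (by linarith [hε r _ ih]) _)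
  obtain ⟨p, hp, hpseg⟩ := exists_eq_on_segments (S := Set.Ioc (0 : ℝ) 1) ⟨1, one_pos, le_rfl⟩
    (fun r => k r (E r) + L r (E r))
    (v := fun r j => if j < k r (E r) then 1 else (1 + ε r (E r)) / m) fun r j => by
      split_ifs
      exacts [⟨one_pos, le_rfl⟩, ⟨div_pos (by linarith [hε r _ (hE r)]) hm0,
        (div_le_one hm0).2 (hεm r _ (hE r))⟩]
  set N : ℕ → ℕ := fun r => ∑ i ∈ range r, (k i (E i) + L i (E i))
  have hboost : ∀ r, ∀ j < k r (E r), p (N r + j) = 1 := fun r j hj => by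
    rw [hpseg r j (by omega), if_pos hj]
  have hblock : ∀ r, ∀ j < L r (E r), p (N r + k r (E r) + j) = (1 + ε r (E r)) / m :=
    fun r j hj => by rw [add_assoc, hpseg r _ (by omega), if_neg (by omega)]
  have hN : ∀ r, N (r + 1) = N r + k r (E r) + L r (E r) := fun r => by
    simp only [N, sum_range_succ, add_assoc]
  have hprod_boost : ∀ r, ∏ i ∈ range (N r + k r (E r)), m * p i = E r * m ^ k r (E r) := by
    intro r
    rw [prod_range_add_eq_mul_pow fun j hj => by rw [hboost r j hj, mul_one]]
    congr 1
    induction r with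
    | zero => simp [N, E]
    | succ r ih =>
      rw [hN, prod_range_add_eq_mul_pow (c := 1 + ε r (E r)) fun j hj => by
        rw [hblock r j hj, mul_div_cancel₀ _ hm0.ne'], prod_range_add_eq_mul_pow fun j hj => by
        rw [hboost r j hj, mul_one], ih]
  exact ⟨{
    p := p
    N := N
    k := fun r => k r (E r)
    L := fun r => L r (E r)
    B := fun r => E r * m ^ k r (E r)
    ε := fun r => ε r (E r)
    η := fun r => η r (E r)
    p_mem := hp
    N_zero := sum_range_zero _
    N_succ := hN
    L_pos := fun r => hL r _ (hE r)
    p_boost := hboost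
    p_block := hblock
    prod_eq := hprod_boost
    ε_mul_B := fun r => hεB r _ (hE r)
    η_mul_B := fun r => hηB r _ (hE r)
    ε_pos := fun r => hε r _ (hE r)
    ε_le_half := fun r => hε2 r _ (hE r)
    one_add_ε_le := fun r => hεm r _ (hE r)
    η_pos := fun r => hη r _ (hE r)
    pgfSlope_le := fun r => hslope r _ (hE r)
    pow_L_le := fun r => hεL r _ (hE r) }⟩

namespace BlockSchedule

variable {q : ℕ → ℝ} {m : ℝ}

theorem one_lt_mean (S : BlockSchedule q m) : 1 < m := by
  linarith [S.ε_pos 0, S.one_add_ε_le 0]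

theorem mean_pos (S : BlockSchedule q m) : 0 < m := zero_lt_one.trans S.one_lt_mean

variable (S : BlockSchedule q m)

theorem B_pos (r : ℕ) : 0 < S.B r :=
  pos_of_mul_pos_right (S.ε_mul_B r ▸ pow_pos two_pos r : 0 < S.ε r * S.B r) (S.ε_pos r).le

theorem mul_p_block (r : ℕ) : ∀ j < S.L r, m * S.p (S.N r + S.k r + j) = 1 + S.ε r :=
  fun j hj => by rw [S.p_block r j hj, mul_div_cancel₀ _ S.mean_pos.ne']

theorem mul_p_boost (r : ℕ) : ∀ j < S.k r, m * S.p (S.N r + j) = m :=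
  fun j hj => by rw [S.p_boost r j hj, mul_one]

theorem two_pow_le_prod (r : ℕ) : 2 ^ r ≤ ∏ i ∈ range (S.N r), m * S.p i := by
  cases r with
  | zero => simp [S.N_zero]
  | succ r =>
    rw [S.N_succ, prod_range_add_eq_mul_pow (S.mul_p_block r), S.prod_eq, pow_succ]
    calc 2 ^ r * 2 ≤ S.B r := by
          rw [← S.ε_mul_B r]
          nlinarith [S.ε_le_half r, S.B_pos r, pow_pos (two_pos (α := ℝ)) r]
      _ ≤ S.B r * (1 + S.ε r) ^ S.L r :=
          le_mul_of_one_le_right (S.B_pos r).le (one_le_pow₀ (by linarith [S.ε_pos r]))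

theorem sum_Ico_inv_prod_le (r : ℕ) :
    ∑ i ∈ Ico (S.N r) (S.N (r + 1)), (∏ j ∈ range (i + 1), m * S.p j)⁻¹
      ≤ ((m - 1)⁻¹ + 1) * (1 / 2) ^ r := by
  have h2r : 0 < ∏ i ∈ range (S.N r), m * S.p i :=
    (pow_pos two_pos r).trans_le (S.two_pow_le_prod r)
  rw [S.N_succ, ← sum_Ico_consecutive _ (Nat.le_add_right _ _) (Nat.le_add_right _ _)]
  have hboost := _root_.sum_Ico_inv_prod_le S.one_lt_mean (S.mul_p_boost r) h2r.le
  have hblock := _root_.sum_Ico_inv_prod_le (by linarith [S.ε_pos r]) (S.mul_p_block r)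
    (S.prod_eq r ▸ (S.B_pos r).le)
  rw [S.prod_eq, add_sub_cancel_left, ← mul_inv, mul_comm, S.ε_mul_B] at hblock
  calc _ ≤ (∏ i ∈ range (S.N r), m * S.p i)⁻¹ * (m - 1)⁻¹ + (2 ^ r)⁻¹ :=
        add_le_add hboost hblock
    _ ≤ (2 ^ r)⁻¹ * (m - 1)⁻¹ + (2 ^ r)⁻¹ := by
        gcongr
        · exact inv_nonneg.2 (sub_nonneg.2 S.one_lt_mean.le)
        · exact S.two_pow_le_prod r
    _ = ((m - 1)⁻¹ + 1) * (1 / 2) ^ r := by rw [one_div_pow, one_div]; ring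

theorem summable_inv_prod : Summable (fun n => (∏ k ∈ range (n + 1), (m * S.p k))⁻¹) := by
  refine summable_of_sum_Ico_le (fun n => inv_nonneg.2 (prod_nonneg fun i _ => ?_))
    (strictMono_nat_of_lt_succ fun r => ?_) S.N_zero
    ((summable_geometric_two).mul_left _) S.sum_Ico_inv_prod_le
  · exact mul_nonneg S.mean_pos.le (S.p_mem i).1.le
  · rw [S.N_succ]; have := S.L_pos r; omega

theorem one_sub_pgfCompSeq_zero_le (hq : ∀ k, 0 ≤ q k) (hq1 : HasSum q 1)
    (hm : HasSum (fun k : ℕ => (k : ℝ) * q k) m) {r n : ℕ} (hn : S.N (r + 1) ≤ n) :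
    1 - pgfCompSeq (fun k => thinPgf q (S.p k)) n 0 ≤ 2 * (2 ^ r)⁻¹ := by
  have hP : ∀ k, S.p k ∈ Set.Icc 0 1 := fun k => Set.Ioc_subset_Icc_self (S.p_mem k)
  have hmaps : ∀ k, Set.MapsTo (thinPgf q (S.p k)) (Set.Icc 0 1) (Set.Icc 0 1) :=
    fun k => mapsTo_thinPgf hq hq1 (hP k)
  obtain ⟨t, rfl⟩ : ∃ t, n = (S.N r + S.k r) + (S.L r + t) :=
    ⟨n - S.N (r + 1), by have := S.N_succ r; omega⟩
  have hε : S.ε r ∈ Set.Icc 0 1 := ⟨(S.ε_pos r).le, (S.ε_le_half r).trans (by norm_num)⟩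
  rw [pgfCompSeq_add (S.N r + S.k r) (S.L r + t), pgfCompSeq_add (S.L r) t, pgfCompSeq_eq_iterate
    (F := fun k => thinPgf q (S.p (S.N r + S.k r + k))) fun j hj => by rw [S.p_block r j hj]]
  set w := pgfCompSeq (fun k => thinPgf q (S.p (S.N r + S.k r + (S.L r + k)))) t 0
  have hw : w ∈ Set.Icc 0 1 := mapsTo_pgfCompSeq (fun k => hmaps _) t ⟨le_rfl, zero_le_one⟩
  have hPr : (1 + S.ε r) / m ∈ Set.Icc 0 1 := S.p_block r 0 (S.L_pos r) ▸ hP _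
  have hy := (mapsTo_thinPgf hq hq1 hPr |>.iterate (S.L r)) hw
  calc _ ≤ (∏ k ∈ range (S.N r + S.k r), m * S.p k) *
        (1 - (thinPgf q ((1 + S.ε r) / m))^[S.L r] w) :=
        one_sub_pgfCompSeq_le (fun k => mul_nonneg S.mean_pos.le (hP k).1) hmaps
          (fun k z hz => one_sub_thinPgf_le hq hq1 hm (hP k) hz) _ hy
    _ ≤ S.B r * max ((1 - S.ε r) ^ S.L r) ((1 + S.ε r) * S.η r) := by
        rw [S.prod_eq]
        exact mul_le_mul_of_nonneg_left (one_sub_iterate_thinPgf_le hq hq1 hm hε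
          (S.one_add_ε_le r) (S.η_pos r).le (S.pgfSlope_le r) _ hw) (S.B_pos r).le
    _ ≤ S.B r * (2 * S.η r) := by
        refine mul_le_mul_of_nonneg_left (max_le ((S.pow_L_le r).trans ?_) ?_) (S.B_pos r).le
        · linarith [S.η_pos r]
        · nlinarith [S.η_pos r, hε.2]
    _ = 2 * (2 ^ r)⁻¹ := by rw [← S.η_mul_B]; ring

theorem tendsto_pgfCompSeq (hq : ∀ k, 0 ≤ q k) (hq1 : HasSum q 1)
    (hm : HasSum (fun k : ℕ => (k : ℝ) * q k) m) :
    Tendsto (fun n => pgfCompSeq (fun k => thinPgf q (S.p k)) n 0) atTop (𝓝 1) := by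
  have hmaps : ∀ k, Set.MapsTo (thinPgf q (S.p k)) (Set.Icc 0 1) (Set.Icc 0 1) :=
    fun k => mapsTo_thinPgf hq hq1 (Set.Ioc_subset_Icc_self (S.p_mem k))
  refine tendsto_order.2 ⟨fun a ha => ?_, fun a ha => Eventually.of_forall fun n =>
    (mapsTo_pgfCompSeq hmaps n ⟨le_rfl, zero_le_one⟩).2.trans_lt ha⟩
  obtain ⟨r, hr⟩ := exists_pow_lt_of_lt_one (by linarith : 0 < (1 - a) / 2) one_half_lt_one
  filter_upwards [eventually_ge_atTop (S.N (r + 1))] with n hn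
  have h := S.one_sub_pgfCompSeq_zero_le hq hq1 hm hn
  rw [← inv_pow, ← one_div] at h
  linarith

end BlockSchedule

/-- Let `f(z) = ∑ q_k z^k` be a probability generating function
with mean `m = f'(1) > 1` and infinite second factorial moment `f''(1) = ∞`.
Then there is a sequence `0 < p_n ≤ 1` such that the series
`∑_n ∏_{k=1}^n (m p_k)⁻¹` converges, and, with `f_n(z) = f(1 - p_n + p_n z)`,
the iterated compositions satisfy `(f_1 ∘ ⋯ ∘ f_n)(0) → 1`. -/
theorem stmt1 (q : ℕ → ℝ) (hq : ∀ k, 0 ≤ q k) (hq1 : HasSum q 1)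
    (m : ℝ) (hm : HasSum (fun k : ℕ => (k : ℝ) * q k) m) (hm1 : 1 < m)
    (hvar : ¬ Summable (fun k : ℕ => (k : ℝ) * ((k : ℝ) - 1) * q k)) :
    ∃ p : ℕ → ℝ, (∀ n, 0 < p n ∧ p n ≤ 1) ∧
      Summable (fun n => (∏ k ∈ Finset.range (n + 1), (m * p k))⁻¹) ∧
      Tendsto
        (fun n => pgfCompSeq
          (fun k z => ∑' j : ℕ, q j * (1 - p k + p k * z) ^ j) n 0)
        atTop (nhds 1) := by
  obtain ⟨S⟩ := nonempty_blockSchedule hq hm hm1 hvar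
  exact ⟨S.p, S.p_mem, S.summable_inv_prod, S.tendsto_pgfCompSeq hq hq1 hm⟩
end

section
/- Let g be a probability generating function with g'(1) = 1 and finite positive second factorial moment, and set σ² = g''(1) ∈ (0, ∞). Then lim_{n→∞} n·(1 − g^{∘n}(0)) = 2/σ², where g^{∘n} denotes the n-fold composition of g with itself. -/
open Filter Finset

/-! Auxiliary polynomial inequalities for `(1-x)^k`. -/

private lemma knn (n : ℕ) : (0:ℝ) ≤ (n:ℝ) * ((n:ℝ) - 1) := by
  rcases Nat.eq_zero_or_pos n with h | h
  · simp [h]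
  · have : (1:ℝ) ≤ n := by exact_mod_cast h
    nlinarith

private lemma knn3 (n : ℕ) : (0:ℝ) ≤ (n:ℝ) * ((n:ℝ) - 1) * ((n:ℝ) - 2) := by
  rcases lt_or_ge n 2 with h | h
  · interval_cases n <;> norm_num
  · have : (2:ℝ) ≤ n := by exact_mod_cast h
    exact mul_nonneg (mul_nonneg (by linarith) (by linarith)) (by linarith)

private lemma pow_ub (x : ℝ) (hx0 : 0 ≤ x) (hx1 : x ≤ 1) (k : ℕ) :
    (1 - x) ^ k ≤ 1 - k * x + k * ((k:ℝ) - 1) / 2 * x ^ 2 := by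
  induction k with
  | zero => norm_num
  | succ n ih =>
    have h1 : (0:ℝ) ≤ 1 - x := by linarith
    have h3 : (1 - x) * (1 - x) ^ n ≤ (1 - x) * (1 - n * x + n * ((n:ℝ) - 1) / 2 * x ^ 2) :=
      mul_le_mul_of_nonneg_left ih h1
    have h2 : (1 - x) ^ (n + 1) = (1 - x) * (1 - x) ^ n := by ring
    have hn := knn n
    push_cast
    nlinarith [mul_nonneg (mul_nonneg hx0 hx0) hx0, mul_nonneg hn (mul_nonneg (mul_nonneg hx0 hx0) hx0)]

private lemma pow_lb (x : ℝ) (hx0 : 0 ≤ x) (hx1 : x ≤ 1) (k : ℕ) :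
    1 - k * x + k * ((k:ℝ) - 1) / 2 * x ^ 2 - k * ((k:ℝ) - 1) * ((k:ℝ) - 2) / 6 * x ^ 3
      ≤ (1 - x) ^ k := by
  induction k with
  | zero => norm_num
  | succ n ih =>
    have h1 : (0:ℝ) ≤ 1 - x := by linarith
    have h3 : (1 - x) * (1 - n * x + n * ((n:ℝ) - 1) / 2 * x ^ 2
        - n * ((n:ℝ) - 1) * ((n:ℝ) - 2) / 6 * x ^ 3) ≤ (1 - x) * (1 - x) ^ n :=
      mul_le_mul_of_nonneg_left ih h1
    have h2 : (1 - x) ^ (n + 1) = (1 - x) * (1 - x) ^ n := by ring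
    have hn := knn n
    have hn3 := knn3 n
    push_cast
    nlinarith [mul_nonneg hn3 (mul_nonneg (mul_nonneg (mul_nonneg hx0 hx0) hx0) hx0),
      mul_nonneg hn (mul_nonneg (mul_nonneg hx0 hx0) hx0)]

private lemma pow_bern (x : ℝ) (hx1 : x ≤ 2) (k : ℕ) : 1 - k * x ≤ (1 - x) ^ k := by
  have := one_add_mul_le_pow (a := -x) (by linarith) k
  have e : (1 + -x) = 1 - x := by ring
  rw [e] at this
  linarith

private lemma pow_strict (x : ℝ) (hx0 : 0 < x) (hx1 : x ≤ 1) {m : ℕ} (hm : 2 ≤ m) :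
    1 - m * x < (1 - x) ^ m := by
  induction m, hm using Nat.le_induction with
  | base => push_cast; nlinarith
  | succ n hn ih =>
    have h1 : (0:ℝ) ≤ 1 - x := by linarith
    have h3 : (1 - x) * (1 - n * x) ≤ (1 - x) * (1 - x) ^ n :=
      mul_le_mul_of_nonneg_left ih.le h1
    have h2 : (1 - x) ^ (n + 1) = (1 - x) * (1 - x) ^ n := by ring
    have hn' : (2:ℝ) ≤ n := by exact_mod_cast hn
    push_cast
    nlinarith [mul_pos (mul_pos hx0 hx0) (show (0:ℝ) < n by linarith)]

/-- Monotone difference estimate: `v^j - u^j ≤ j (v - u)` for `0 ≤ u ≤ v ≤ 1`. -/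
private lemma pow_sub_le (u v : ℝ) (hu : 0 ≤ u) (huv : u ≤ v) (hv : v ≤ 1) (j : ℕ) :
    v ^ j - u ^ j ≤ (j:ℝ) * (v - u) := by
  induction j with
  | zero => norm_num
  | succ i ih =>
    have e1 : v ^ (i + 1) = v * v ^ i := by ring
    have e2 : u ^ (i + 1) = u * u ^ i := by ring
    have p1 : (0:ℝ) ≤ u ^ i := pow_nonneg hu i
    have p2 : u ^ i ≤ 1 := pow_le_one₀ hu (huv.trans hv)
    have p3 : v ^ i ≤ 1 := pow_le_one₀ (hu.trans huv) hv
    have p4 : (0:ℝ) ≤ v ^ i := pow_nonneg (hu.trans huv) i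
    have p5 : u ^ i ≤ v ^ i := pow_le_pow_left₀ hu huv i
    have h6 : v * (v ^ i - u ^ i) ≤ v * ((i:ℝ) * (v - u)) :=
      mul_le_mul_of_nonneg_left ih (hu.trans huv)
    push_cast
    nlinarith [mul_nonneg (mul_nonneg (Nat.cast_nonneg i : (0:ℝ) ≤ i)
      (by linarith : (0:ℝ) ≤ v - u)) (by linarith : (0:ℝ) ≤ 1 - v),
      mul_le_mul_of_nonneg_right p2 (by linarith : (0:ℝ) ≤ v - u)]

/-- The key sequential limit: if `X (n+1) = X n - d n` with the two-sided quadratic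
bounds on `d n` and `X n → 0`, then `1/X (n+1) - 1/X n → σ2/2`. -/
private lemma delta_tendsto (σ2 : ℝ) (hσpos : 0 < σ2) (X d : ℕ → ℝ)
    (hXmem : ∀ n, 0 < X n ∧ X n ≤ 1)
    (hrec : ∀ n, X (n + 1) = X n - d n)
    (hd0 : ∀ n, 0 ≤ d n)
    (hdub : ∀ n, d n ≤ σ2 / 2 * X n ^ 2)
    (hlow : ∀ ε : ℝ, 0 < ε → ∃ C : ℝ, 0 ≤ C ∧ ∀ n, (σ2 - ε) / 2 * X n ^ 2 - C * X n ^ 3 ≤ d n)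
    (hXlim : Tendsto X atTop (nhds 0)) :
    Tendsto (fun n => (X (n + 1))⁻¹ - (X n)⁻¹) atTop (nhds (σ2 / 2)) := by
  have hXne : ∀ n, X n ≠ 0 := fun n => (hXmem n).1.ne'
  have hΔeq : ∀ n, (X (n + 1))⁻¹ - (X n)⁻¹ = d n / (X n * X (n + 1)) := by
    intro n
    have e : X n - X (n + 1) = d n := by rw [hrec n]; ring
    rw [inv_sub_inv (hXne (n + 1)) (hXne n), e, mul_comm]
  rw [tendsto_order]
  refine ⟨fun b hb => ?_, fun b hb => ?_⟩
  · -- lower bound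
    obtain ⟨C, hC0, hC⟩ := hlow (σ2 / 2 - b) (by linarith)
    have hδ : 0 < (σ2 / 2 - b) / 2 / (C + 1) := div_pos (by linarith) (by linarith)
    filter_upwards [hXlim.eventually_lt_const hδ] with n hn
    have h1 := (hXmem n).1
    have h2 := (hXmem (n + 1)).1
    rw [hΔeq n]
    have hle : X n * X (n + 1) ≤ X n ^ 2 := by nlinarith [hrec n, hd0 n]
    have s1 : d n / X n ^ 2 ≤ d n / (X n * X (n + 1)) :=
      div_le_div_of_nonneg_left (hd0 n) (mul_pos h1 h2) hle
    have s2 := hC n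
    have e1 : (C + 1) * ((σ2 / 2 - b) / 2 / (C + 1)) = (σ2 / 2 - b) / 2 := by
      rw [mul_comm]; exact div_mul_cancel₀ _ (by linarith)
    have h4 : (C + 1) * X n < (σ2 / 2 - b) / 2 := by
      have := mul_lt_mul_of_pos_left hn (show (0:ℝ) < C + 1 by linarith)
      rwa [e1] at this
    have s3 : b < ((σ2 - (σ2 / 2 - b)) / 2 * X n ^ 2 - C * X n ^ 3) / X n ^ 2 := by
      rw [lt_div_iff₀ (by positivity : (0:ℝ) < X n ^ 2)]
      have hpos : 0 < (σ2 / 2 - b) / 2 - C * X n := by nlinarith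
      nlinarith [mul_pos hpos (mul_pos h1 h1)]
    calc b < ((σ2 - (σ2 / 2 - b)) / 2 * X n ^ 2 - C * X n ^ 3) / X n ^ 2 := s3
      _ ≤ d n / X n ^ 2 := div_le_div_of_nonneg_right s2 (by positivity)
      _ ≤ d n / (X n * X (n + 1)) := s1
  · -- upper bound
    have hb0 : 0 < b := lt_trans (by positivity) hb
    have hδ : 0 < (b - σ2 / 2) / (b * σ2 + 1) := div_pos (by linarith) (by nlinarith)
    filter_upwards [hXlim.eventually_lt_const hδ] with n hn
    have h1 := (hXmem n).1
    have h2 := (hXmem (n + 1)).1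
    rw [hΔeq n, div_lt_iff₀ (mul_pos h1 h2)]
    have hkey : (b * σ2 + 1) * X n < b - σ2 / 2 := by
      have h5 := mul_lt_mul_of_pos_left hn (show (0:ℝ) < b * σ2 + 1 by nlinarith)
      have e : (b * σ2 + 1) * ((b - σ2 / 2) / (b * σ2 + 1)) = b - σ2 / 2 := by
        rw [mul_comm]; exact div_mul_cancel₀ _ (by nlinarith)
      rwa [e] at h5
    have hd_le : d n ≤ σ2 / 2 * X n ^ 2 := hdub n
    have hX1lb : X n - σ2 / 2 * X n ^ 2 ≤ X (n + 1) := by rw [hrec n]; linarith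
    have step : b * (X n * (X n - σ2 / 2 * X n ^ 2)) ≤ b * (X n * X (n + 1)) :=
      mul_le_mul_of_nonneg_left (mul_le_mul_of_nonneg_left hX1lb h1.le) hb0.le
    have hpos : 0 < b - σ2 / 2 - b * (σ2 / 2) * X n := by nlinarith
    have final : σ2 / 2 * X n ^ 2 < b * (X n * (X n - σ2 / 2 * X n ^ 2)) := by
      nlinarith [mul_pos hpos (mul_pos h1 h1)]
    linarith

/-- **Kesten–Ney–Spitzer / Kolmogorov.** Let `g(z) = ∑ q_k z^k`
be a probability generating function with mean `g'(1) = 1` and finite positive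
second factorial moment `σ² = g''(1) ∈ (0, ∞)`.  Then
`n · (1 - g^{∘n}(0)) → 2/σ²` as `n → ∞`. -/
theorem stmt2 (q : ℕ → ℝ) (hq : ∀ k, 0 ≤ q k) (hq1 : HasSum q 1)
    (hm : HasSum (fun k : ℕ => (k : ℝ) * q k) 1)
    (σ2 : ℝ) (hσ : HasSum (fun k : ℕ => (k : ℝ) * ((k : ℝ) - 1) * q k) σ2)
    (hσpos : 0 < σ2) :
    Tendsto (fun n : ℕ => (n : ℝ) * (1 - (fun z : ℝ => ∑' k : ℕ, q k * z ^ k)^[n] 0))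
      atTop (nhds (2 / σ2)) := by
  obtain ⟨g, hg_def⟩ : ∃ g : ℝ → ℝ, g = fun z : ℝ => ∑' k : ℕ, q k * z ^ k := ⟨_, rfl⟩
  rw [show (fun z : ℝ => ∑' k : ℕ, q k * z ^ k) = g from hg_def.symm]
  -- summability and basic facts about g on [0,1]
  have hqsum : Summable q := hq1.summable
  have hsumz : ∀ z : ℝ, 0 ≤ z → z ≤ 1 → Summable (fun k => q k * z ^ k) := by
    intro z h0 h1
    refine Summable.of_nonneg_of_le (fun k => mul_nonneg (hq k) (pow_nonneg h0 k))
      (fun k => ?_) hqsum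
    have : z ^ k ≤ 1 := pow_le_one₀ h0 h1
    nlinarith [hq k]
  have hgsum : ∀ z : ℝ, 0 ≤ z → z ≤ 1 → HasSum (fun k => q k * z ^ k) (g z) := by
    intro z h0 h1
    rw [hg_def]
    exact (hsumz z h0 h1).hasSum
  -- the "d" quantity: d x = x - (1 - g (1-x)), for x ∈ [0,1]
  have hdsum : ∀ x : ℝ, 0 ≤ x → x ≤ 1 →
      HasSum (fun k : ℕ => (k:ℝ) * q k * x - (q k - q k * (1 - x) ^ k))
        (x - (1 - g (1 - x))) := by
    intro x h0 h1
    have := (hm.mul_right x).sub (hq1.sub (hgsum (1 - x) (by linarith) (by linarith)))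
    rwa [one_mul] at this
  -- termwise bounds
  have term_nonneg : ∀ x : ℝ, 0 ≤ x → x ≤ 1 → ∀ k : ℕ,
      0 ≤ (k:ℝ) * q k * x - (q k - q k * (1 - x) ^ k) := by
    intro x h0 h1 k
    have hb := pow_bern x (by linarith) k
    nlinarith [hq k]
  have term_ub : ∀ x : ℝ, 0 ≤ x → x ≤ 1 → ∀ k : ℕ,
      (k:ℝ) * q k * x - (q k - q k * (1 - x) ^ k)
        ≤ (k:ℝ) * ((k:ℝ) - 1) * q k * (x ^ 2 / 2) := by
    intro x h0 h1 k
    have hb := pow_ub x h0 h1 k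
    nlinarith [hq k]
  have term_lb : ∀ x : ℝ, 0 ≤ x → x ≤ 1 → ∀ k : ℕ,
      (k:ℝ) * ((k:ℝ) - 1) * q k * (x ^ 2 / 2)
        - (k:ℝ) * ((k:ℝ) - 1) * ((k:ℝ) - 2) * q k * (x ^ 3 / 6)
        ≤ (k:ℝ) * q k * x - (q k - q k * (1 - x) ^ k) := by
    intro x h0 h1 k
    have hb := pow_lb x h0 h1 k
    nlinarith [hq k]
  -- global bounds on d
  have d_nonneg : ∀ x : ℝ, 0 ≤ x → x ≤ 1 → 0 ≤ x - (1 - g (1 - x)) := by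
    intro x h0 h1
    exact hasSum_le (term_nonneg x h0 h1) hasSum_zero (hdsum x h0 h1)
  have d_ub : ∀ x : ℝ, 0 ≤ x → x ≤ 1 → x - (1 - g (1 - x)) ≤ σ2 * (x ^ 2 / 2) := by
    intro x h0 h1
    exact hasSum_le (term_ub x h0 h1) (hdsum x h0 h1) (hσ.mul_right (x ^ 2 / 2))
  have d_lb : ∀ (N : ℕ) (x : ℝ), 0 ≤ x → x ≤ 1 →
      (∑ k ∈ range N, (k:ℝ) * ((k:ℝ) - 1) * q k) * (x ^ 2 / 2)
        - (∑ k ∈ range N, (k:ℝ) * ((k:ℝ) - 1) * ((k:ℝ) - 2) * q k) * (x ^ 3 / 6)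
        ≤ x - (1 - g (1 - x)) := by
    intro N x h0 h1
    have h2 : ∑ k ∈ range N, ((k:ℝ) * q k * x - (q k - q k * (1 - x) ^ k))
        ≤ x - (1 - g (1 - x)) :=
      sum_le_hasSum _ (fun k _ => term_nonneg x h0 h1 k) (hdsum x h0 h1)
    refine le_trans (le_trans (le_of_eq ?_) (Finset.sum_le_sum
      (fun k _ => term_lb x h0 h1 k))) h2
    rw [Finset.sum_sub_distrib, Finset.sum_mul, Finset.sum_mul]
  -- there is m ≥ 2 with q m > 0
  obtain ⟨m, hm2, hqm⟩ : ∃ m : ℕ, 2 ≤ m ∧ 0 < q m := by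
    by_contra h
    push_neg at h
    have hz : ∀ k : ℕ, (k:ℝ) * ((k:ℝ) - 1) * q k = 0 := by
      intro k
      match k with
      | 0 => simp
      | 1 => simp
      | (n + 2) =>
        have : q (n + 2) = 0 := le_antisymm (h _ (by omega)) (hq _)
        simp [this]
    have h0 : HasSum (fun _ : ℕ => (0:ℝ)) σ2 := by
      convert hσ using 1
      exact (funext fun k => (hz k).symm)
    have := h0.unique hasSum_zero
    linarith
  -- strict positivity of 1 - g (1-x) for x ∈ (0,1]
  have h_pos : ∀ x : ℝ, 0 < x → x ≤ 1 → 0 < 1 - g (1 - x) := by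
    intro x h0 h1
    have key : q m - q m * (1 - x) ^ m ≤ 1 - g (1 - x) := by
      refine le_hasSum (hq1.sub (hgsum (1 - x) (by linarith) (by linarith))) m
        (fun j _ => ?_)
      have : (1 - x) ^ j ≤ 1 := pow_le_one₀ (by linarith) (by linarith)
      nlinarith [hq j]
    have hlt : (1 - x) ^ m < 1 := pow_lt_one₀ (by linarith) (by linarith) (by omega)
    nlinarith
  -- single-term lower bound on d
  have d_single : ∀ x : ℝ, 0 ≤ x → x ≤ 1 →
      (m:ℝ) * q m * x - (q m - q m * (1 - x) ^ m) ≤ x - (1 - g (1 - x)) :=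
    fun x h0 h1 => le_hasSum (hdsum x h0 h1) m (fun j _ => term_nonneg x h0 h1 j)
  -- the sequence X n = 1 - g^[n] 0
  obtain ⟨X, hX_def⟩ : ∃ X : ℕ → ℝ, X = fun n => 1 - g^[n] 0 := ⟨_, rfl⟩
  have hX0 : X 0 = 1 := by simp [hX_def]
  have hXrec : ∀ n, X (n + 1) = 1 - g (1 - X n) := by
    intro n
    simp only [hX_def, Function.iterate_succ_apply']
    ring_nf
  -- X n ∈ (0, 1]
  have hXmem : ∀ n, 0 < X n ∧ X n ≤ 1 := by
    intro n
    induction n with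
    | zero => rw [hX0]; exact ⟨one_pos, le_refl 1⟩
    | succ n ih =>
      obtain ⟨h0, h1⟩ := ih
      rw [hXrec n]
      refine ⟨h_pos _ h0 h1, ?_⟩
      have := d_nonneg _ h0.le h1
      linarith
  -- X is antitone
  have hXanti : ∀ n, X (n + 1) ≤ X n := by
    intro n
    obtain ⟨h0, h1⟩ := hXmem n
    have := d_nonneg _ h0.le h1
    rw [hXrec n]; linarith
  have hXanti' : Antitone X := antitone_nat_of_succ_le hXanti
  -- X n → 0
  have hXlim : Tendsto X atTop (nhds 0) := by
    have hbdd : BddBelow (Set.range X) := ⟨0, fun y ⟨n, hn⟩ => hn ▸ (hXmem n).1.le⟩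
    have hlim := tendsto_atTop_ciInf hXanti' hbdd
    have hL0 : 0 ≤ ⨅ n, X n := le_ciInf fun n => (hXmem n).1.le
    rcases eq_or_lt_of_le hL0 with hL | hL
    · rwa [← hL] at hlim
    · exfalso
      have hLle : ∀ n, (⨅ n, X n) ≤ X n := fun n => ciInf_le hbdd n
      obtain ⟨L, hL_def⟩ : ∃ L : ℝ, L = ⨅ n, X n := ⟨_, rfl⟩
      rw [← hL_def] at hL hLle
      have hL1 : L ≤ 1 := (hLle 0).trans hX0.le
      have hc : 0 < q m * ((m:ℝ) * L - 1 + (1 - L) ^ m) := by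
        have hps := pow_strict L hL hL1 hm2
        have : 0 < (m:ℝ) * L - 1 + (1 - L) ^ m := by linarith
        exact mul_pos hqm this
      have hstep : ∀ n, q m * ((m:ℝ) * L - 1 + (1 - L) ^ m) ≤ X n - X (n + 1) := by
        intro n
        obtain ⟨h0, h1⟩ := hXmem n
        have hd := d_single _ h0.le h1
        have hLn := hLle n
        have hmono : (m:ℝ) * L - 1 + (1 - L) ^ m ≤ (m:ℝ) * X n - 1 + (1 - X n) ^ m := by
          have hkey := pow_sub_le (1 - X n) (1 - L) (by linarith) (by linarith) (by linarith) m
          nlinarith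
        have hqm' : q m * ((m:ℝ) * L - 1 + (1 - L) ^ m)
            ≤ q m * ((m:ℝ) * X n - 1 + (1 - X n) ^ m) :=
          mul_le_mul_of_nonneg_left hmono (hq m)
        have e : X n - X (n + 1) = X n - (1 - g (1 - X n)) := by rw [hXrec n]
        rw [e]
        nlinarith
      have hdesc : ∀ n, X n ≤ X 0 - n * (q m * ((m:ℝ) * L - 1 + (1 - L) ^ m)) := by
        intro n
        induction n with
        | zero => simp
        | succ n ih =>
          have := hstep n
          push_cast
          push_cast at ih
          nlinarith
      obtain ⟨n, hn⟩ := exists_nat_gt ((X 0 - L) / (q m * ((m:ℝ) * L - 1 + (1 - L) ^ m)))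
      have h1 := hdesc n
      have h2 := hLle n
      rw [div_lt_iff₀ hc] at hn
      nlinarith
  -- apply the key limit lemma with d n := X n - (1 - g (1 - X n))
  have hΔ : Tendsto (fun n => (X (n + 1))⁻¹ - (X n)⁻¹) atTop (nhds (σ2 / 2)) := by
    refine delta_tendsto σ2 hσpos X (fun n => X n - (1 - g (1 - X n))) hXmem
      (fun n => by rw [hXrec n]; ring) (fun n => d_nonneg _ (hXmem n).1.le (hXmem n).2)
      (fun n => ?_) (fun ε hε => ?_) hXlim
    · have := d_ub (X n) (hXmem n).1.le (hXmem n).2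
      linarith
    · -- choose N with partial sum > σ2 - ε
      have hps : Tendsto (fun N => ∑ k ∈ range N, (k:ℝ) * ((k:ℝ) - 1) * q k)
          atTop (nhds σ2) := hσ.tendsto_sum_nat
      obtain ⟨N, hN⟩ := (hps.eventually_const_lt (show σ2 - ε < σ2 by linarith)).exists
      refine ⟨|∑ k ∈ range N, (k:ℝ) * ((k:ℝ) - 1) * ((k:ℝ) - 2) * q k| / 6,
        by positivity, fun n => ?_⟩
      obtain ⟨h0, h1⟩ := hXmem n
      show (σ2 - ε) / 2 * X n ^ 2
        - |∑ k ∈ range N, (k:ℝ) * ((k:ℝ) - 1) * ((k:ℝ) - 2) * q k| / 6 * X n ^ 3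
        ≤ X n - (1 - g (1 - X n))
      have hdlb := d_lb N (X n) h0.le h1
      have habs : (∑ k ∈ range N, (k:ℝ) * ((k:ℝ) - 1) * ((k:ℝ) - 2) * q k)
          ≤ |∑ k ∈ range N, (k:ℝ) * ((k:ℝ) - 1) * ((k:ℝ) - 2) * q k| := le_abs_self _
      have hx3 : (0:ℝ) ≤ X n ^ 3 := by positivity
      have hx2 : (0:ℝ) ≤ X n ^ 2 := by positivity
      have hS : σ2 - ε < ∑ k ∈ range N, (k:ℝ) * ((k:ℝ) - 1) * q k := hN
      nlinarith [mul_le_mul_of_nonneg_right habs hx3,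
        mul_le_mul_of_nonneg_right hS.le hx2]
  -- Cesàro
  have hCes := hΔ.cesaro
  have hCes' : Tendsto (fun n : ℕ => (n⁻¹ : ℝ) * ((X n)⁻¹ - 1)) atTop (nhds (σ2 / 2)) := by
    refine hCes.congr fun n => ?_
    rw [Finset.sum_range_sub (fun i => (X i)⁻¹) n, hX0, inv_one]
  have hAn : Tendsto (fun n : ℕ => (n⁻¹ : ℝ) * (X n)⁻¹) atTop (nhds (σ2 / 2)) := by
    have h := hCes'.add tendsto_inv_atTop_nhds_zero_nat
    rw [add_zero] at h
    refine h.congr fun n => by ring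
  have hfinal := hAn.inv₀ (by positivity)
  have heq : ∀ n : ℕ, ((n⁻¹ : ℝ) * (X n)⁻¹)⁻¹ = (n : ℝ) * X n := by
    intro n
    rw [mul_inv, inv_inv, inv_inv]
  have hfin2 : Tendsto (fun n : ℕ => (n : ℝ) * X n) atTop (nhds ((σ2 / 2)⁻¹)) :=
    hfinal.congr heq
  have e2 : (σ2 / 2)⁻¹ = 2 / σ2 := by
    rw [inv_div]
  rw [e2] at hfin2
  exact hfin2.congr fun n => by rw [hX_def]
end

section
/- Let g be a probability generating function with g'(1) = 1 and infinite second factorial moment g''(1) = ∞. Then lim_{n→∞} n·(1 − g^{∘n}(0)) = 0, where g^{∘n} denotes the n-fold composition of g with itself. In particular, for every n there exists an integer L_n such that 1 − g^{∘k}(0) < 4^{−n}·k^{−1} for all k ≥ L_n. -/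
open Filter Finset

noncomputable def knsT (k : ℕ) (s : ℝ) : ℝ := ∑ i ∈ Finset.range k, ∑ j ∈ Finset.range i, s ^ j

lemma knsT_nonneg (k : ℕ) {s : ℝ} (hs : 0 ≤ s) : 0 ≤ knsT k s := by
  apply Finset.sum_nonneg; intro i _; apply Finset.sum_nonneg; intro j _; positivity

lemma knsT_identity (k : ℕ) (s : ℝ) :
    (k : ℝ) * (1 - s) - (1 - s ^ k) = (1 - s) ^ 2 * knsT k s := by
  induction k with
  | zero => simp [knsT]
  | succ n ih =>
    have hg := geom_sum_mul s n
    rw [knsT, Finset.sum_range_succ, ← knsT]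
    push_cast
    linear_combination ih - (s - 1) * hg

lemma kns_geom (i : ℕ) (s : ℝ) : (∑ j ∈ Finset.range i, s ^ j) * (1 - s) = 1 - s ^ i := by
  linear_combination -(geom_sum_mul s i)

lemma knsT_le (k : ℕ) {s : ℝ} (h0 : 0 ≤ s) (h1 : s < 1) : knsT k s ≤ (k : ℝ) * (1 - s)⁻¹ := by
  have hpos : 0 < 1 - s := by linarith
  have hinner : ∀ i : ℕ, (∑ j ∈ Finset.range i, s ^ j) ≤ (1 - s)⁻¹ := by
    intro i
    rw [show (1 - s)⁻¹ = 1 / (1 - s) by ring, le_div_iff₀ hpos, kns_geom]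
    nlinarith [pow_nonneg h0 i]
  calc knsT k s ≤ ∑ _i ∈ Finset.range k, (1 - s)⁻¹ := by
        apply Finset.sum_le_sum; intro i _; exact hinner i
    _ = (k : ℝ) * (1 - s)⁻¹ := by simp [mul_comm]

lemma knsT_one_eq (k : ℕ) : 2 * knsT k 1 = (k : ℝ) * ((k : ℝ) - 1) := by
  induction k with
  | zero => simp [knsT]
  | succ n ih =>
    rw [knsT, Finset.sum_range_succ, ← knsT]
    simp only [one_pow, Finset.sum_const, Finset.card_range, nsmul_eq_mul, mul_one]
    push_cast
    linear_combination ih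

variable {q : ℕ → ℝ}

lemma kns_summable_pow (hq : ∀ k, 0 ≤ q k) (hq1 : Summable q) {s : ℝ} (h0 : 0 ≤ s) (h1 : s ≤ 1) :
    Summable fun k : ℕ => q k * s ^ k :=
  Summable.of_nonneg_of_le (fun k => mul_nonneg (hq k) (pow_nonneg h0 k))
    (fun k => mul_le_of_le_one_right (hq k) (pow_le_one₀ h0 h1)) hq1

lemma kns_summable_T (hq : ∀ k, 0 ≤ q k) (hm : Summable fun k : ℕ => (k : ℝ) * q k)
    {s : ℝ} (h0 : 0 ≤ s) (h1 : s < 1) : Summable fun k : ℕ => q k * knsT k s := by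
  refine Summable.of_nonneg_of_le (fun k => mul_nonneg (hq k) (knsT_nonneg k h0))
    (fun k => ?_) (hm.mul_right (1 - s)⁻¹)
  calc q k * knsT k s ≤ q k * ((k : ℝ) * (1 - s)⁻¹) :=
        mul_le_mul_of_nonneg_left (knsT_le k h0 h1) (hq k)
    _ = (k : ℝ) * q k * (1 - s)⁻¹ := by ring

lemma kns_identity (hq : ∀ k, 0 ≤ q k) (hq1 : HasSum q 1)
    (hm : HasSum (fun k : ℕ => (k : ℝ) * q k) 1) {s : ℝ} (h0 : 0 ≤ s) (h1 : s < 1) :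
    (∑' k : ℕ, q k * s ^ k) - s = (1 - s) ^ 2 * ∑' k : ℕ, q k * knsT k s := by
  have hs1 : s ≤ 1 := h1.le
  have hA : Summable (fun k : ℕ => (k : ℝ) * q k * (1 - s)) := hm.summable.mul_right _
  have hB : Summable (fun k : ℕ => q k * (1 - s ^ k)) := by
    refine (hq1.summable.sub (kns_summable_pow hq hq1.summable h0 hs1)).congr fun k => by ring
  have h2 : (1 - s) ^ 2 * ∑' k : ℕ, q k * knsT k s
      = ∑' k : ℕ, ((k : ℝ) * q k * (1 - s) - q k * (1 - s ^ k)) := by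
    rw [← tsum_mul_left]
    exact tsum_congr fun k => by linear_combination (-(q k)) * knsT_identity k s
  rw [h2, Summable.tsum_sub hA hB]
  have e1 : ∑' k : ℕ, (k : ℝ) * q k * (1 - s) = 1 - s := by
    have := (hm.mul_right (1 - s)).tsum_eq
    simpa using this
  have e2 : ∑' k : ℕ, q k * (1 - s ^ k) = 1 - ∑' k : ℕ, q k * s ^ k := by
    have h3 : (fun k : ℕ => q k * (1 - s ^ k)) = fun k : ℕ => q k - q k * s ^ k := by
      funext k; ring
    rw [h3, Summable.tsum_sub hq1.summable (kns_summable_pow hq hq1.summable h0 hs1), hq1.tsum_eq]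
  rw [e1, e2]; ring


/-- **Kesten–Ney–Spitzer, infinite-variance case.** Let
`g(z) = ∑ q_k z^k` be a probability generating function with mean `g'(1) = 1`
and infinite second factorial moment `g''(1) = ∞`.  Then
`n · (1 - g^{∘n}(0)) → 0`; in particular, for every `n` there is an `L_n` such
that `1 - g^{∘k}(0) < 4^{-n} k⁻¹` for all `k ≥ L_n`. -/
theorem stmt3 (q : ℕ → ℝ) (hq : ∀ k, 0 ≤ q k) (hq1 : HasSum q 1)
    (hm : HasSum (fun k : ℕ => (k : ℝ) * q k) 1)
    (hvar : ¬ Summable (fun k : ℕ => (k : ℝ) * ((k : ℝ) - 1) * q k)) :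
    Tendsto (fun n : ℕ => (n : ℝ) * (1 - (fun z : ℝ => ∑' k : ℕ, q k * z ^ k)^[n] 0))
      atTop (nhds 0) ∧
    ∀ n : ℕ, ∃ L : ℕ, ∀ k ≥ L,
      1 - (fun z : ℝ => ∑' j : ℕ, q j * z ^ j)^[k] 0 < (4 : ℝ) ^ (-(n : ℤ)) * (k : ℝ)⁻¹ := by
  classical
  have hqs : Summable q := hq1.summable
  set g : ℝ → ℝ := fun z => ∑' k : ℕ, q k * z ^ k with hgdef
  have hgeval : ∀ s : ℝ, g s = ∑' k : ℕ, q k * s ^ k := fun s => rfl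
  -- a K ≥ 2 with positive weight
  obtain ⟨K, hK2, hKpos⟩ : ∃ K : ℕ, 2 ≤ K ∧ 0 < q K := by
    by_contra hcon
    push_neg at hcon
    apply hvar
    have hz : ∀ k : ℕ, (k : ℝ) * ((k : ℝ) - 1) * q k = 0 := by
      intro k
      match k with
      | 0 => simp
      | 1 => simp
      | (n+2) =>
        have h0 : q (n+2) = 0 := le_antisymm (hcon (n+2) (by omega)) (hq (n+2))
        rw [h0, mul_zero]
    exact (summable_congr hz).mpr summable_zero
  -- basic facts about g
  have hg_nonneg : ∀ {s : ℝ}, 0 ≤ s → 0 ≤ g s := by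
    intro s h0
    rw [hgeval]
    exact tsum_nonneg fun k => mul_nonneg (hq k) (pow_nonneg h0 k)
  have hg_lt_one : ∀ {s : ℝ}, 0 ≤ s → s < 1 → g s < 1 := by
    intro s h0 h1
    have hsum1 := kns_summable_pow hq hqs h0 h1.le
    have hsub : Summable fun k : ℕ => q k - q k * s ^ k := hqs.sub hsum1
    have hterm : q K - q K * s ^ K ≤ ∑' k : ℕ, (q k - q k * s ^ k) := by
      refine Summable.le_tsum hsub K fun j _ => ?_
      have h2 : q j * s ^ j ≤ q j := mul_le_of_le_one_right (hq j) (pow_le_one₀ h0 h1.le)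
      linarith
    have htot : ∑' k : ℕ, (q k - q k * s ^ k) = 1 - g s := by
      rw [hgeval, Summable.tsum_sub hqs hsum1, hq1.tsum_eq]
    have hKlt : s ^ K < 1 := pow_lt_one₀ h0 h1 (by omega)
    nlinarith [hKpos]
  have hx : ∀ n : ℕ, 0 ≤ g^[n] 0 ∧ g^[n] 0 < 1 := by
    intro n
    induction n with
    | zero => simp
    | succ n ih =>
      rw [Function.iterate_succ_apply']
      exact ⟨hg_nonneg ih.1, hg_lt_one ih.1 ih.2⟩
  have hD_pos : ∀ n : ℕ, 0 < 1 - g^[n] 0 := fun n => by linarith [(hx n).2]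
  -- lower bound on H
  have hHge : ∀ {s : ℝ}, 0 ≤ s → s < 1 → q K ≤ ∑' k : ℕ, q k * knsT k s := by
    intro s h0 h1
    have hT1 : (1 : ℝ) ≤ knsT K s := by
      have h1mem : 1 ∈ Finset.range K := Finset.mem_range.2 (by omega)
      have h2 := Finset.single_le_sum (f := fun i => ∑ j ∈ Finset.range i, s ^ j)
        (fun i _ => Finset.sum_nonneg fun j _ => pow_nonneg h0 j) h1mem
      simpa [knsT] using h2
    calc q K = q K * 1 := (mul_one _).symm
      _ ≤ q K * knsT K s := by nlinarith [hKpos]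
      _ ≤ ∑' k : ℕ, q k * knsT k s := Summable.le_tsum (kns_summable_T hq hm.summable h0 h1) K
          (fun j _ => mul_nonneg (hq j) (knsT_nonneg j h0))
  have hHnn : ∀ n : ℕ, 0 ≤ ∑' k : ℕ, q k * knsT k (g^[n] 0) := fun n =>
    tsum_nonneg fun k => mul_nonneg (hq k) (knsT_nonneg k (hx n).1)
  -- the recurrence
  have hrec : ∀ n : ℕ, 1 - g^[n+1] 0
      = (1 - g^[n] 0) - (1 - g^[n] 0) ^ 2 * ∑' k : ℕ, q k * knsT k (g^[n] 0) := by
    intro n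
    have hid := kns_identity hq hq1 hm (hx n).1 (hx n).2
    rw [Function.iterate_succ_apply', hgeval]
    linarith [hid]
  have hmono : ∀ n : ℕ, 1 - g^[n+1] 0 ≤ 1 - g^[n] 0 := by
    intro n
    rw [hrec n]
    nlinarith [hHnn n, sq_nonneg (1 - g^[n] 0), mul_nonneg (sq_nonneg (1 - g^[n] 0)) (hHnn n)]
  have hanti : Antitone (fun n : ℕ => 1 - g^[n] 0) := antitone_nat_of_succ_le hmono
  -- D n → 0
  have hDsmall : ∀ ε : ℝ, 0 < ε → ∃ N : ℕ, 1 - g^[N] 0 < ε := by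
    intro ε hε
    by_contra hcon
    push_neg at hcon
    have hstep : ∀ n : ℕ, 1 - g^[n+1] 0 ≤ (1 - g^[n] 0) - ε ^ 2 * q K := by
      intro n
      rw [hrec n]
      have h1 := hHge (hx n).1 (hx n).2
      have h2 := hcon n
      nlinarith [mul_le_mul (pow_le_pow_left₀ hε.le h2 2) h1 hKpos.le (sq_nonneg (1 - g^[n] 0))]
    have hlin : ∀ n : ℕ, 1 - g^[n] 0 ≤ 1 - (n : ℝ) * (ε ^ 2 * q K) := by
      intro n
      induction n with
      | zero => simp
      | succ n ih =>
        have h3 := hstep n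
        have : ((n : ℝ) + 1) * (ε ^ 2 * q K) = (n : ℝ) * (ε ^ 2 * q K) + ε ^ 2 * q K := by ring
        push_cast
        rw [this]
        linarith
    have hpos : 0 < ε ^ 2 * q K := by positivity
    obtain ⟨n, hn⟩ := exists_nat_gt ((1 - ε) / (ε ^ 2 * q K))
    have h4 : 1 - ε < (n : ℝ) * (ε ^ 2 * q K) := by
      rw [div_lt_iff₀ hpos] at hn
      linarith
    linarith [hcon n, hlin n]
  have hDto0 : Tendsto (fun n : ℕ => 1 - g^[n] 0) atTop (nhds 0) := by
    rw [Metric.tendsto_atTop]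
    intro ε hε
    obtain ⟨N, hN⟩ := hDsmall ε hε
    refine ⟨N, fun n hn => ?_⟩
    have h1 : 1 - g^[n] 0 ≤ 1 - g^[N] 0 := hanti hn
    have h2 := hD_pos n
    rw [Real.dist_eq, sub_zero, abs_of_pos h2]
    linarith
  have hxto1 : Tendsto (fun n : ℕ => g^[n] 0) atTop (nhds 1) := by
    have h1 := hDto0.const_sub 1
    simpa using h1
  -- H (x n) → ∞
  have hvnn : ∀ k : ℕ, 0 ≤ (k : ℝ) * ((k : ℝ) - 1) * q k := by
    intro k
    match k with
    | 0 => simp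
    | (n+1) =>
      apply mul_nonneg (mul_nonneg (by positivity) ?_) (hq _)
      push_cast
      linarith [Nat.cast_nonneg (α := ℝ) n]
  have hps : Tendsto (fun N : ℕ => ∑ k ∈ Finset.range N, (k : ℝ) * ((k : ℝ) - 1) * q k)
      atTop atTop := (not_summable_iff_tendsto_nat_atTop_of_nonneg hvnn).mp hvar
  have hHto : Tendsto (fun n : ℕ => ∑' k : ℕ, q k * knsT k (g^[n] 0)) atTop atTop := by
    rw [tendsto_atTop]
    intro M
    obtain ⟨N₁, hN₁⟩ := (hps.eventually_ge_atTop (2 * M + 2)).exists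
    have hf1 : M + 1 ≤ ∑ k ∈ Finset.range N₁, q k * knsT k 1 := by
      have h5 : 2 * ∑ k ∈ Finset.range N₁, q k * knsT k 1
          = ∑ k ∈ Finset.range N₁, (k : ℝ) * ((k : ℝ) - 1) * q k := by
        rw [Finset.mul_sum]
        refine Finset.sum_congr rfl fun k _ => ?_
        linear_combination (q k) * knsT_one_eq k
      linarith
    have hfcont : Continuous fun s : ℝ => ∑ k ∈ Finset.range N₁, q k * knsT k s := by
      apply continuous_finset_sum
      intro k _
      apply Continuous.mul continuous_const
      unfold knsT
      apply continuous_finset_sum; intro i _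
      apply continuous_finset_sum; intro j _
      exact continuous_pow j
    have hftend : Tendsto (fun n : ℕ => ∑ k ∈ Finset.range N₁, q k * knsT k (g^[n] 0))
        atTop (nhds (∑ k ∈ Finset.range N₁, q k * knsT k 1)) :=
      (hfcont.tendsto 1).comp hxto1
    have hev : ∀ᶠ n in atTop, M < ∑ k ∈ Finset.range N₁, q k * knsT k (g^[n] 0) :=
      hftend.eventually (eventually_gt_nhds (by linarith))
    filter_upwards [hev] with n hn
    have hle : ∑ k ∈ Finset.range N₁, q k * knsT k (g^[n] 0)
        ≤ ∑' k : ℕ, q k * knsT k (g^[n] 0) :=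
      Summable.sum_le_tsum _ (fun k _ => mul_nonneg (hq k) (knsT_nonneg k (hx n).1))
        (kns_summable_T hq hm.summable (hx n).1 (hx n).2)
    linarith
  -- reciprocal growth
  have hrecip : ∀ n : ℕ, (1 - g^[n] 0)⁻¹ + (∑' k : ℕ, q k * knsT k (g^[n] 0))
      ≤ (1 - g^[n+1] 0)⁻¹ := by
    intro n
    have ha := hD_pos n
    have hb := hD_pos (n+1)
    have hh := hHnn n
    have hba := hrec n
    have expand : ((1 - g^[n] 0)⁻¹ + (∑' k : ℕ, q k * knsT k (g^[n] 0)))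
        * ((1 - g^[n] 0) - (1 - g^[n] 0) ^ 2 * ∑' k : ℕ, q k * knsT k (g^[n] 0))
        = 1 - ((1 - g^[n] 0) * ∑' k : ℕ, q k * knsT k (g^[n] 0)) ^ 2 := by
      field_simp
      ring
    have h1 : ((1 - g^[n] 0)⁻¹ + (∑' k : ℕ, q k * knsT k (g^[n] 0))) * (1 - g^[n+1] 0) ≤ 1 := by
      rw [hba, expand]
      nlinarith [sq_nonneg ((1 - g^[n] 0) * ∑' k : ℕ, q k * knsT k (g^[n] 0))]
    calc (1 - g^[n] 0)⁻¹ + (∑' k : ℕ, q k * knsT k (g^[n] 0))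
        ≤ 1 / (1 - g^[n+1] 0) := (le_div_iff₀ hb).mpr h1
      _ = (1 - g^[n+1] 0)⁻¹ := one_div _
  have hgrow : ∀ (N₀ : ℕ) (M : ℝ), 0 ≤ M → (∀ m ≥ N₀, M ≤ ∑' k : ℕ, q k * knsT k (g^[m] 0)) →
      ∀ n ≥ N₀, ((n - N₀ : ℕ) : ℝ) * M ≤ (1 - g^[n] 0)⁻¹ := by
    intro N₀ M hM hHM n hn
    induction n, hn using Nat.le_induction with
    | base =>
      simp only [Nat.sub_self, Nat.cast_zero, zero_mul]
      exact inv_nonneg.2 (hD_pos N₀).le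
    | succ n hn ih =>
      have h1 := hrecip n
      have h2 := hHM n hn
      have h3 : ((n + 1 - N₀ : ℕ) : ℝ) = ((n - N₀ : ℕ) : ℝ) + 1 := by
        have h4 : n + 1 - N₀ = (n - N₀) + 1 := by omega
        rw [h4]; push_cast; ring
      rw [h3, add_mul, one_mul]
      linarith
  -- main limit
  have key : Tendsto (fun n : ℕ => (n : ℝ) * (1 - g^[n] 0)) atTop (nhds 0) := by
    rw [Metric.tendsto_atTop]
    intro ε hε
    have hMpos : (0 : ℝ) < 2 / ε := by positivity
    obtain ⟨N₀, hN₀⟩ := (tendsto_atTop.mp hHto (2 / ε)).exists_forall_of_atTop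
    refine ⟨2 * N₀ + 2, fun n hn => ?_⟩
    have hDn := hD_pos n
    have hgrown := hgrow N₀ (2 / ε) hMpos.le hN₀ n (by omega)
    have hcast : ((n : ℝ) + 2) / 2 ≤ ((n - N₀ : ℕ) : ℝ) := by
      have h2 : ((n - N₀ : ℕ) : ℝ) = (n : ℝ) - (N₀ : ℝ) := by
        rw [Nat.cast_sub (by omega)]
      have h3 : (2 * N₀ + 2 : ℕ) ≤ n := hn
      have h4 : ((2 * N₀ + 2 : ℕ) : ℝ) ≤ (n : ℝ) := Nat.cast_le.mpr h3
      push_cast at h4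
      rw [h2]
      linarith
    have hinvge : ((n : ℝ) + 2) / ε ≤ (1 - g^[n] 0)⁻¹ := by
      have h5 : ((n : ℝ) + 2) / ε = ((n : ℝ) + 2) / 2 * (2 / ε) := by
        field_simp
      rw [h5]
      calc ((n : ℝ) + 2) / 2 * (2 / ε) ≤ ((n - N₀ : ℕ) : ℝ) * (2 / ε) :=
            mul_le_mul_of_nonneg_right hcast hMpos.le
        _ ≤ (1 - g^[n] 0)⁻¹ := hgrown
    have hmul : (1 - g^[n] 0) * (((n : ℝ) + 2) / ε) ≤ 1 := by
      have h6 := mul_le_mul_of_nonneg_left hinvge hDn.le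
      rwa [mul_inv_cancel₀ (ne_of_gt hDn)] at h6
    rw [Real.dist_eq, sub_zero,
      abs_of_nonneg (mul_nonneg (Nat.cast_nonneg n) hDn.le)]
    have h7 : (1 - g^[n] 0) * ((n : ℝ) + 2) ≤ ε := by
      have h8 : (1 - g^[n] 0) * ((n : ℝ) + 2) / ε ≤ 1 := by
        rw [mul_div_assoc]; exact hmul
      exact (div_le_one hε).mp h8
    nlinarith [hDn]
  constructor
  · exact key
  · intro n
    have hpow : (0 : ℝ) < 4 ^ (-(n : ℤ)) := by positivity
    obtain ⟨L₀, hL₀⟩ := Metric.tendsto_atTop.mp key (4 ^ (-(n : ℤ))) hpow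
    refine ⟨max L₀ 1, fun k hk => ?_⟩
    have hk1 : 1 ≤ k := le_trans (le_max_right _ _) hk
    have hkL : L₀ ≤ k := le_trans (le_max_left _ _) hk
    have h9 := hL₀ k hkL
    rw [Real.dist_eq, sub_zero,
      abs_of_nonneg (mul_nonneg (Nat.cast_nonneg k) (hD_pos k).le)] at h9
    have hkpos : (0 : ℝ) < (k : ℝ) := by exact_mod_cast hk1
    rw [show (4 : ℝ) ^ (-(n : ℤ)) * (k : ℝ)⁻¹ = 4 ^ (-(n : ℤ)) / (k : ℝ) from
      (div_eq_mul_inv _ _).symm, lt_div_iff₀ hkpos]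
    calc (1 - g^[k] 0) * (k : ℝ) = (k : ℝ) * (1 - g^[k] 0) := mul_comm _ _
      _ < 4 ^ (-(n : ℤ)) := h9
end

section
/- Let m > 1 be a real number and let (L_n)_{n≥1} be any sequence of positive real numbers. Then there exist integers 0 < t_1 < u_1 < t_2 < u_2 < t_3 < ⋯ and a sequence (p_n)_{n≥1} with p_n ∈ {1/m, 1}, where p_n = 1/m exactly when t_j ≤ n < u_j for some j, such that, writing K_n = ∏_{k=1}^{t_n} (m·p_k), the following hold for every n: (a) K_n ≥ m^n; (b) u_n − t_n ≥ 2^{−n} K_n and u_n − t_n > L_n; and (c) ∑_{n=1}^∞ ∏_{k=1}^n (m·p_k)^{-1} < ∞. -/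
/-!
Alternate growth stretches of lengths `d j ≥ 1` with killing stretches of lengths `ℓ j`. A killing
generation contributes the factor `m * (1 / m) = 1` to the cumulative mean, so the mean at the start
of the `(j + 1)`-st killing stretch is `m ^ E` with `E = d 0 + ⋯ + d j`, the number of growth
generations so far. This does not involve the `ℓ`'s, so `ℓ j = ⌈m ^ E / 2 ^ (j + 1)⌉` can be chosen
afterwards, and `m ^ d j > 2 ^ (j + 1) * L (j + 1)` makes it exceed `L (j + 1)`. To sum `1 / M_n`,
cut `ℕ` at the ends of the killing stretches: in each block the growth stretch contributes at most
`m ^ (-E') / (1 - 1 / m)`, with `E'` the previous exponent, and the killing stretch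
`ℓ j * m ^ (-E) ≤ 2 ^ (-(j + 1)) + m ^ (-E)`; both are summable over the blocks because the
exponents increase strictly.
-/

open Filter Finset

theorem summable_of_sum_Ico_le_s6 {f : ℕ → ℝ} (hf : ∀ n, 0 ≤ f n) {u : ℕ → ℕ} (hu : StrictMono u)
    {a : ℕ → ℝ} (ha : Summable a) (hblock : ∀ j, ∑ n ∈ Ico (u j) (u (j + 1)), f n ≤ a j) :
    Summable f := by
  have ha0 : ∀ j, 0 ≤ a j := fun j => (sum_nonneg fun n _ => hf n).trans (hblock j)
  have hsplit : ∀ J, ∑ n ∈ range (u J), f n ≤ ∑ n ∈ range (u 0), f n + ∑ j ∈ range J, a j := by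
    intro J
    induction J with
    | zero => simp
    | succ J ih =>
      rw [← sum_range_add_sum_Ico f (hu (Nat.lt_succ_self J)).le, sum_range_succ]
      linarith [hblock J]
  refine summable_of_sum_range_le (c := ∑ n ∈ range (u 0), f n + ∑' j, a j) hf fun N => ?_
  calc ∑ n ∈ range N, f n ≤ ∑ n ∈ range (u N), f n :=
        sum_le_sum_of_subset_of_nonneg (range_subset_range.2 (hu.id_le N)) fun n _ _ => hf n
    _ ≤ ∑ n ∈ range (u 0), f n + ∑ j ∈ range N, a j := hsplit N
    _ ≤ ∑ n ∈ range (u 0), f n + ∑' j, a j := by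
        gcongr; exact ha.sum_le_tsum _ fun j _ => ha0 j

theorem sum_Ico_inv_pow_le {r : ℝ} (hr : 1 < r) (e a b : ℕ) :
    ∑ n ∈ Ico a b, (r ^ (e + (n - a)))⁻¹ ≤ (r⁻¹) ^ e / (1 - r⁻¹) := by
  have h0 : 0 ≤ r⁻¹ := by positivity
  have h1 : r⁻¹ < 1 := inv_lt_one_of_one_lt₀ hr
  rw [sum_Ico_eq_sum_range]
  simp only [Nat.add_sub_cancel_left, pow_add, mul_inv, ← inv_pow, ← mul_sum, range_eq_Ico]
  calc (r⁻¹) ^ e * ∑ k ∈ Ico 0 (b - a), r⁻¹ ^ k ≤ (r⁻¹) ^ e * (r⁻¹ ^ 0 / (1 - r⁻¹)) := by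
        gcongr; exact geom_sum_Ico_le_of_lt_one h0 h1
    _ = (r⁻¹) ^ e / (1 - r⁻¹) := by ring

namespace KillingSchedule

variable (m : ℝ) (d ℓ : ℕ → ℕ)

/-- The `(j + 1)`-st block is a growth stretch `[killEnd j, killStart (j + 1))` of length `d j`
followed by the killing stretch `[killStart (j + 1), killEnd (j + 1))` of length `ℓ j`; the value
`killStart 0` is never used. -/
def killEnd : ℕ → ℕ
  | 0 => 1
  | j + 1 => killEnd j + d j + ℓ j

def killStart : ℕ → ℕ
  | 0 => 0
  | j + 1 => killEnd d ℓ j + d j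

def Killed (n : ℕ) : Prop := ∃ j ≥ 1, killStart d ℓ j ≤ n ∧ n < killEnd d ℓ j

def growthTime (j : ℕ) : ℕ := ∑ i ∈ range j, d i

variable {d ℓ}

theorem killStart_lt_killEnd (hℓ : ∀ j, 1 ≤ ℓ j) : ∀ j, killStart d ℓ j < killEnd d ℓ j
  | 0 => Nat.zero_lt_one
  | j + 1 => by have := hℓ j; simp only [killStart, killEnd]; omega

theorem killEnd_lt_killStart_succ (hd : ∀ j, 1 ≤ d j) (j : ℕ) :
    killEnd d ℓ j < killStart d ℓ (j + 1) := by
  have := hd j; simp only [killStart]; omega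

theorem killStart_le_killEnd : ∀ j, killStart d ℓ j ≤ killEnd d ℓ j
  | 0 => Nat.zero_le 1
  | j + 1 => by simp only [killStart, killEnd]; omega

theorem strictMono_killEnd (hd : ∀ j, 1 ≤ d j) : StrictMono (killEnd d ℓ) :=
  strictMono_nat_of_lt_succ fun j => by have := hd j; simp only [killEnd]; omega

theorem strictMono_killStart (hd : ∀ j, 1 ≤ d j) : StrictMono (killStart d ℓ) :=
  strictMono_nat_of_lt_succ fun j =>
    (killStart_le_killEnd j).trans_lt (killEnd_lt_killStart_succ hd j)

theorem growthTime_succ (j : ℕ) : growthTime d (j + 1) = growthTime d j + d j :=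
  sum_range_succ _ _

theorem strictMono_growthTime (hd : ∀ j, 1 ≤ d j) : StrictMono (growthTime d) :=
  strictMono_nat_of_lt_succ fun j => by rw [growthTime_succ]; have := hd j; omega

theorem not_killed_of_mem_gap (hd : ∀ j, 1 ≤ d j) {j n : ℕ} (h₁ : killEnd d ℓ j ≤ n)
    (h₂ : n < killStart d ℓ (j + 1)) : ¬Killed d ℓ n := by
  rintro ⟨i, -, hi₁, hi₂⟩
  rcases le_or_gt i j with hij | hij
  · exact absurd ((strictMono_killEnd (ℓ := ℓ) hd).monotone hij) (by omega)
  · exact absurd ((strictMono_killStart (ℓ := ℓ) hd).monotone (show j + 1 ≤ i from hij))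
      (by omega)

theorem killed_of_mem_stretch {j n : ℕ} (h₁ : killStart d ℓ (j + 1) ≤ n)
    (h₂ : n < killEnd d ℓ (j + 1)) : Killed d ℓ n :=
  ⟨j + 1, Nat.succ_pos j, h₁, h₂⟩

theorem killEnd_succ (j : ℕ) : killEnd d ℓ (j + 1) = killStart d ℓ (j + 1) + ℓ j := rfl

theorem one_le_killEnd : ∀ j, 1 ≤ killEnd d ℓ j
  | 0 => le_rfl
  | j + 1 => by have := one_le_killEnd j; simp only [killEnd]; omega

variable (d ℓ)

open Classical in
noncomputable def killProb (n : ℕ) : ℝ := if Killed d ℓ n then 1 / m else 1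

/-- `meanBefore m d ℓ N` is the paper's `M_{N-1} = ∏_{1 ≤ k < N} m p_k`: the half-open range splits
along the half-open stretches `[t_j, u_j)`. -/
noncomputable def meanBefore (N : ℕ) : ℝ := ∏ k ∈ Ico 1 N, m * killProb m d ℓ k

variable {m d ℓ}

theorem killProb_eq_one_div_iff (hm : m ≠ 1) {n : ℕ} :
    killProb m d ℓ n = 1 / m ↔ Killed d ℓ n := by
  unfold killProb
  split_ifs with h
  · simp [h]
  · simpa [h, eq_comm] using hm

theorem killProb_eq_one_div_or_eq_one {n : ℕ} :
    killProb m d ℓ n = 1 / m ∨ killProb m d ℓ n = 1 := by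
  unfold killProb
  split_ifs <;> simp

theorem meanBefore_pos (hm : 0 < m) (N : ℕ) : 0 < meanBefore m d ℓ N :=
  prod_pos fun k _ => mul_pos hm (by unfold killProb; split_ifs <;> positivity)

theorem meanBefore_eq_mul_prod {a b : ℕ} (ha : 1 ≤ a) (hab : a ≤ b) :
    meanBefore m d ℓ b = meanBefore m d ℓ a * ∏ k ∈ Ico a b, m * killProb m d ℓ k :=
  (prod_Ico_consecutive _ ha hab).symm

theorem meanBefore_of_forall_not_killed {a b : ℕ} (ha : 1 ≤ a) (hab : a ≤ b)
    (h : ∀ k ∈ Ico a b, ¬Killed d ℓ k) :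
    meanBefore m d ℓ b = meanBefore m d ℓ a * m ^ (b - a) := by
  rw [meanBefore_eq_mul_prod ha hab,
    prod_congr rfl fun k hk => by rw [killProb, if_neg (h k hk), mul_one], prod_const, Nat.card_Ico]

theorem meanBefore_of_forall_killed (hm : m ≠ 0) {a b : ℕ} (ha : 1 ≤ a) (hab : a ≤ b)
    (h : ∀ k ∈ Ico a b, Killed d ℓ k) : meanBefore m d ℓ b = meanBefore m d ℓ a := by
  rw [meanBefore_eq_mul_prod ha hab,
    prod_congr rfl fun k hk => by rw [killProb, if_pos (h k hk), mul_one_div_cancel hm],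
    prod_const_one, mul_one]

theorem meanBefore_killEnd (hm : m ≠ 0) (hd : ∀ j, 1 ≤ d j) :
    ∀ j, meanBefore m d ℓ (killEnd d ℓ j) = m ^ growthTime d j
  | 0 => by simp [meanBefore, killEnd, growthTime]
  | j + 1 => by
    have hgap : killEnd d ℓ j ≤ killStart d ℓ (j + 1) := (killEnd_lt_killStart_succ hd j).le
    rw [meanBefore_of_forall_killed hm (hgap.trans' (one_le_killEnd j)) (killStart_le_killEnd _)
        fun k hk => killed_of_mem_stretch (mem_Ico.1 hk).1 (mem_Ico.1 hk).2,
      meanBefore_of_forall_not_killed (one_le_killEnd j) hgap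
        fun k hk => not_killed_of_mem_gap hd (mem_Ico.1 hk).1 (mem_Ico.1 hk).2,
      meanBefore_killEnd hm hd j, growthTime_succ, pow_add, killStart, Nat.add_sub_cancel_left]

theorem meanBefore_of_mem_gap (hm : m ≠ 0) (hd : ∀ j, 1 ≤ d j) {j N : ℕ}
    (h₁ : killEnd d ℓ j ≤ N) (h₂ : N ≤ killStart d ℓ (j + 1)) :
    meanBefore m d ℓ N = m ^ (growthTime d j + (N - killEnd d ℓ j)) := by
  rw [meanBefore_of_forall_not_killed (one_le_killEnd j) h₁
      fun k hk => not_killed_of_mem_gap hd (mem_Ico.1 hk).1 ((mem_Ico.1 hk).2.trans_le h₂),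
    meanBefore_killEnd hm hd, pow_add]

theorem meanBefore_of_mem_stretch (hm : m ≠ 0) (hd : ∀ j, 1 ≤ d j) {j N : ℕ}
    (h₁ : killStart d ℓ (j + 1) ≤ N) (h₂ : N ≤ killEnd d ℓ (j + 1)) :
    meanBefore m d ℓ N = m ^ growthTime d (j + 1) := by
  have hgap : killEnd d ℓ j ≤ killStart d ℓ (j + 1) := (killEnd_lt_killStart_succ hd j).le
  rw [meanBefore_of_forall_killed hm (hgap.trans' (one_le_killEnd j)) h₁
      fun k hk => killed_of_mem_stretch (mem_Ico.1 hk).1 ((mem_Ico.1 hk).2.trans_le h₂),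
    meanBefore_of_mem_gap hm hd hgap le_rfl, growthTime_succ, killStart, Nat.add_sub_cancel_left]

theorem summable_inv_meanBefore (hm : 1 < m) (hd : ∀ j, 1 ≤ d j)
    (hℓ : ∀ j, (ℓ j : ℝ) ≤ m ^ growthTime d (j + 1) / 2 ^ (j + 1) + 1) :
    Summable fun N => (meanBefore m d ℓ N)⁻¹ := by
  have hm0 : m ≠ 0 := (zero_lt_one.trans hm).ne'
  have hgeom : Summable fun j => m⁻¹ ^ growthTime d j :=
    (summable_geometric_of_lt_one (by positivity) (inv_lt_one_of_one_lt₀ hm)).comp_injective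
      (strictMono_growthTime hd).injective
  have hhalf : Summable fun j : ℕ => (2⁻¹ : ℝ) ^ (j + 1) :=
    (summable_nat_add_iff (f := fun j : ℕ => (2⁻¹ : ℝ) ^ j) 1).2
      (summable_geometric_of_lt_one (by norm_num) (by norm_num))
  have hgeom' : Summable fun j => m⁻¹ ^ growthTime d (j + 1) :=
    (summable_nat_add_iff (f := fun j => m⁻¹ ^ growthTime d j) 1).2 hgeom
  refine summable_of_sum_Ico_le_s6
    (fun N => (inv_pos.2 (meanBefore_pos (zero_lt_one.trans hm) N)).le)
    (strictMono_killEnd (ℓ := ℓ) hd) ((hgeom.div_const (1 - m⁻¹)).add (hhalf.add hgeom'))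
    fun j => ?_
  rw [← sum_Ico_consecutive _ (killEnd_lt_killStart_succ hd j).le (killStart_le_killEnd (j + 1))]
  refine add_le_add ?_ ?_
  · calc ∑ N ∈ Ico (killEnd d ℓ j) (killStart d ℓ (j + 1)), (meanBefore m d ℓ N)⁻¹
        = ∑ N ∈ Ico (killEnd d ℓ j) (killStart d ℓ (j + 1)),
            (m ^ (growthTime d j + (N - killEnd d ℓ j)))⁻¹ :=
          sum_congr rfl fun N hN => by
            rw [meanBefore_of_mem_gap hm0 hd (mem_Ico.1 hN).1 (mem_Ico.1 hN).2.le]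
      _ ≤ _ := sum_Ico_inv_pow_le hm _ _ _
  · calc ∑ N ∈ Ico (killStart d ℓ (j + 1)) (killEnd d ℓ (j + 1)), (meanBefore m d ℓ N)⁻¹
        = ℓ j * (m ^ growthTime d (j + 1))⁻¹ := by
          rw [sum_congr rfl fun N hN => by
              rw [meanBefore_of_mem_stretch hm0 hd (mem_Ico.1 hN).1 (mem_Ico.1 hN).2.le],
            sum_const, Nat.card_Ico, killEnd_succ, Nat.add_sub_cancel_left, nsmul_eq_mul]
      _ ≤ (m ^ growthTime d (j + 1) / 2 ^ (j + 1) + 1) * (m ^ growthTime d (j + 1))⁻¹ := by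
          gcongr; exact hℓ j
      _ = (2⁻¹ : ℝ) ^ (j + 1) + m⁻¹ ^ growthTime d (j + 1) := by
          rw [inv_pow, inv_pow]
          field_simp

theorem prod_Icc_killStart (hm : 1 < m) (hd : ∀ j, 1 ≤ d j) (hℓ : ∀ j, 1 ≤ ℓ j) (j : ℕ) :
    ∏ k ∈ Icc 1 (killStart d ℓ (j + 1)), m * killProb m d ℓ k = m ^ growthTime d (j + 1) := by
  rw [← Ico_add_one_right_eq_Icc]
  exact meanBefore_of_mem_stretch (zero_lt_one.trans hm).ne' hd (Nat.le_succ _)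
    (killStart_lt_killEnd hℓ (j + 1))

end KillingSchedule

open KillingSchedule

theorem stmt6_general (m : ℝ) (hm : 1 < m) (L : ℕ → ℝ) :
    ∃ (t u : ℕ → ℕ) (p : ℕ → ℝ),
      0 < t 1 ∧
      (∀ j ≥ 1, t j < u j ∧ u j < t (j + 1)) ∧
      (∀ n ≥ 1, p n = 1 / m ∨ p n = 1) ∧
      (∀ n ≥ 1, (p n = 1 / m ↔ ∃ j ≥ 1, t j ≤ n ∧ n < u j)) ∧
      (∀ n ≥ 1,
        m ^ n ≤ ∏ k ∈ Finset.Icc 1 (t n), (m * p k) ∧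
        (∏ k ∈ Finset.Icc 1 (t n), (m * p k)) / 2 ^ n ≤ (u n : ℝ) - (t n : ℝ) ∧
        L n < (u n : ℝ) - (t n : ℝ)) ∧
      Summable (fun n => ∏ k ∈ Finset.Icc 1 n, (m * p k)⁻¹) := by
  obtain ⟨d, hd, hdL⟩ : ∃ d : ℕ → ℕ, (∀ j, 1 ≤ d j) ∧ ∀ j, 2 ^ (j + 1) * L (j + 1) < m ^ d j := by
    choose d hd using fun j : ℕ => ((eventually_ge_atTop 1).and
      ((tendsto_pow_atTop_atTop_of_one_lt hm).eventually_gt_atTop (2 ^ (j + 1) * L (j + 1)))).exists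
    exact ⟨d, fun j => (hd j).1, fun j => (hd j).2⟩
  set ℓ : ℕ → ℕ := fun j => ⌈m ^ growthTime d (j + 1) / 2 ^ (j + 1)⌉₊
  have hL : ∀ j, L (j + 1) < m ^ growthTime d (j + 1) / 2 ^ (j + 1) := fun j => by
    rw [lt_div_iff₀ (by positivity), mul_comm]
    exact (hdL j).trans_le (pow_le_pow_right₀ hm.le (by rw [growthTime_succ]; omega))
  have hℓ : ∀ j, 1 ≤ ℓ j := fun j => Nat.ceil_pos.2 (by positivity)
  refine ⟨killStart d ℓ, killEnd d ℓ, killProb m d ℓ,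
    zero_lt_one.trans (killEnd_lt_killStart_succ hd 0),
    fun j _ => ⟨killStart_lt_killEnd hℓ j, killEnd_lt_killStart_succ hd j⟩,
    fun n _ => killProb_eq_one_div_or_eq_one, fun n _ => killProb_eq_one_div_iff hm.ne',
    fun n hn => ?_, ?_⟩
  · obtain ⟨j, rfl⟩ := Nat.exists_eq_add_of_le' hn
    rw [prod_Icc_killStart hm hd hℓ, killEnd_succ, Nat.cast_add, add_sub_cancel_left]
    exact ⟨pow_le_pow_right₀ hm.le ((strictMono_growthTime hd).id_le _), Nat.le_ceil _,
      (hL j).trans_le (Nat.le_ceil _)⟩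
  · simp_rw [prod_inv_distrib, ← Ico_add_one_right_eq_Icc]
    exact (summable_nat_add_iff (f := fun N => (meanBefore m d ℓ N)⁻¹) 1).2
      (summable_inv_meanBefore hm hd fun j => (Nat.ceil_lt_add_one (by positivity)).le)

/-- **the deterministic construction.** Let `m > 1` and let
`(L_n)_{n ≥ 1}` be positive reals.  Then there are integers
`0 < t_1 < u_1 < t_2 < u_2 < ⋯` and a sequence `(p_n)_{n ≥ 1}` with
`p_n ∈ {1/m, 1}`, where `p_n = 1/m` exactly when `t_j ≤ n < u_j` for some
`j ≥ 1`, such that, writing `K_n = ∏_{k=1}^{t_n} (m p_k)`, for every `n ≥ 1`: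
(a) `K_n ≥ m^n`; (b) `u_n - t_n ≥ 2^{-n} K_n` and `u_n - t_n > L_n`;
and (c) `∑_n ∏_{k=1}^n (m p_k)⁻¹ < ∞`. -/
theorem stmt6 (m : ℝ) (hm : 1 < m) (L : ℕ → ℝ) (hL : ∀ n ≥ 1, 0 < L n) :
    ∃ (t u : ℕ → ℕ) (p : ℕ → ℝ),
      0 < t 1 ∧
      (∀ j ≥ 1, t j < u j ∧ u j < t (j + 1)) ∧
      (∀ n ≥ 1, p n = 1 / m ∨ p n = 1) ∧
      (∀ n ≥ 1, (p n = 1 / m ↔ ∃ j ≥ 1, t j ≤ n ∧ n < u j)) ∧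
      (∀ n ≥ 1,
        m ^ n ≤ ∏ k ∈ Finset.Icc 1 (t n), (m * p k) ∧
        (∏ k ∈ Finset.Icc 1 (t n), (m * p k)) / 2 ^ n ≤ (u n : ℝ) - (t n : ℝ) ∧
        L n < (u n : ℝ) - (t n : ℝ)) ∧
      Summable (fun n => ∏ k ∈ Finset.Icc 1 n, (m * p k)⁻¹) :=
  stmt6_general m hm L
end

section
/- Let f be a probability generating function with mean m = f'(1) ∈ (1, ∞), and let g(z) = f(1 − 1/m + z/m). Let (p_k) be a sequence with each p_k ∈ {1/m, 1}, set f_k(z) = f(1 − p_k + p_k z), and suppose t < u are indices such that p_k = 1/m for all t < k ≤ u. Then 1 − (f_1 ∘ f_2 ∘ ⋯ ∘ f_u)(0) ≤ (∏_{k=1}^t m·p_k) · (1 − g^{∘(u−t)}(0)), where g^{∘j} denotes the j-fold composition of g. -/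
open Filter

lemma one_sub_pow_le_aux (z : ℝ) (h0 : 0 ≤ z) (h1 : z ≤ 1) :
    ∀ k : ℕ, 1 - z ^ k ≤ (k : ℝ) * (1 - z) := by
  intro k
  induction k with
  | zero => simp
  | succ n ih =>
    have hzn : 0 ≤ z ^ n := pow_nonneg h0 n
    have hzn1 : z ^ n ≤ 1 := pow_le_one₀ h0 h1
    push_cast
    calc 1 - z ^ (n + 1) = (1 - z) + z * (1 - z ^ n) := by ring
      _ ≤ (1 - z) + 1 * ((n : ℝ) * (1 - z)) := by
          have : z * (1 - z ^ n) ≤ 1 * (1 - z ^ n) := by nlinarith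
          nlinarith
      _ = ((n : ℝ) + 1) * (1 - z) := by ring

/-- **the conditioning bound `P(Z_u > 0) ≤ E Z_t · r_{u-t}`.**
Let `f(z) = ∑ q_k z^k` be a probability generating function with mean
`m = f'(1) ∈ (1, ∞)`, and `g(z) = f(1 - 1/m + z/m)`.  Let `p_k ∈ {1/m, 1}`,
set `f_k(z) = f(1 - p_k + p_k z)`, and suppose `t < u` with `p_k = 1/m` for
all `t < k ≤ u`.  Then
`1 - (f_1 ∘ ⋯ ∘ f_u)(0) ≤ (∏_{k=1}^t m p_k) · (1 - g^{∘(u-t)}(0))`.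
(In `pgfCompSeq` below, the `k`-th function, `k < u`, is `f_{k+1}`.) -/
theorem stmt8 (q : ℕ → ℝ) (hq : ∀ k, 0 ≤ q k) (hq1 : HasSum q 1)
    (m : ℝ) (hm : HasSum (fun k : ℕ => (k : ℝ) * q k) m) (hm1 : 1 < m)
    (f g : ℝ → ℝ)
    (hf : ∀ z ∈ Set.Icc (0 : ℝ) 1, f z = ∑' k : ℕ, q k * z ^ k)
    (hg : ∀ z ∈ Set.Icc (0 : ℝ) 1, g z = f (1 - 1 / m + z / m))
    (p : ℕ → ℝ) (hp : ∀ k, p k = 1 / m ∨ p k = 1)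
    (t u : ℕ) (htu : t < u) (hpk : ∀ k, t < k → k ≤ u → p k = 1 / m) :
    1 - pgfCompSeq (fun k z => f (1 - p (k + 1) + p (k + 1) * z)) u 0 ≤
      (∏ k ∈ Finset.Icc 1 t, (m * p k)) * (1 - g^[u - t] 0) := by
  set F : ℕ → ℝ → ℝ := fun k z => f (1 - p (k + 1) + p (k + 1) * z) with hF
  have hm0 : (0 : ℝ) < m := lt_trans one_pos hm1
  have hinv1 : 1 / m ≤ 1 := (div_le_one hm0).mpr hm1.le
  have hinv0 : 0 < 1 / m := by positivity
  have hp01 : ∀ k, 0 < p k ∧ p k ≤ 1 := by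
    intro k
    rcases hp k with h | h <;> rw [h]
    · exact ⟨hinv0, hinv1⟩
    · exact ⟨one_pos, le_refl 1⟩
  -- summability of q k z^k
  have hsum : ∀ z ∈ Set.Icc (0 : ℝ) 1, Summable (fun k => q k * z ^ k) := by
    intro z hz
    refine Summable.of_nonneg_of_le
      (fun k => mul_nonneg (hq k) (pow_nonneg hz.1 k)) (fun k => ?_) hq1.summable
    calc q k * z ^ k ≤ q k * 1 :=
          mul_le_mul_of_nonneg_left (pow_le_one₀ hz.1 hz.2) (hq k)
      _ = q k := mul_one _
  -- f maps [0,1] to [0,1]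
  have hf01 : ∀ z ∈ Set.Icc (0 : ℝ) 1, f z ∈ Set.Icc (0 : ℝ) 1 := by
    intro z hz
    rw [hf z hz]
    refine ⟨tsum_nonneg fun k => mul_nonneg (hq k) (pow_nonneg hz.1 k), ?_⟩
    have h := Summable.tsum_le_tsum (f := fun k => q k * z ^ k) (g := q)
      (fun k => by
        calc q k * z ^ k ≤ q k * 1 :=
              mul_le_mul_of_nonneg_left (pow_le_one₀ hz.1 hz.2) (hq k)
          _ = q k := mul_one _) (hsum z hz) hq1.summable
    rwa [hq1.tsum_eq] at h
  -- key inequality: 1 - f z ≤ m (1 - z)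
  have key : ∀ z ∈ Set.Icc (0 : ℝ) 1, 1 - f z ≤ m * (1 - z) := by
    intro z hz
    rw [hf z hz]
    have h1 : HasSum (fun k => q k * z ^ k) (∑' k, q k * z ^ k) := (hsum z hz).hasSum
    have h2 : HasSum (fun k => q k - q k * z ^ k) (1 - ∑' k, q k * z ^ k) := hq1.sub h1
    have h3 : HasSum (fun k : ℕ => (k : ℝ) * q k * (1 - z)) (m * (1 - z)) :=
      hm.mul_right (1 - z)
    have h4 : ∀ k : ℕ, q k - q k * z ^ k ≤ (k : ℝ) * q k * (1 - z) := by
      intro k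
      have := one_sub_pow_le_aux z hz.1 hz.2 k
      have hqk := hq k
      nlinarith
    have := Summable.tsum_le_tsum h4 h2.summable h3.summable
    rwa [h2.tsum_eq, h3.tsum_eq] at this
  -- argument of g stays in [0,1]
  have arg01 : ∀ z ∈ Set.Icc (0 : ℝ) 1, (1 - 1 / m + z / m) ∈ Set.Icc (0 : ℝ) 1 := by
    intro z hz
    have h1 : 0 ≤ z / m := div_nonneg hz.1 hm0.le
    have h2 : z / m ≤ 1 / m := by gcongr; exact hz.2
    constructor <;> [linarith; linarith]
  have hg01 : ∀ z ∈ Set.Icc (0 : ℝ) 1, g z ∈ Set.Icc (0 : ℝ) 1 := by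
    intro z hz
    rw [hg z hz]
    exact hf01 _ (arg01 z hz)
  -- argument of F stays in [0,1]
  have argF01 : ∀ k, ∀ z ∈ Set.Icc (0 : ℝ) 1,
      (1 - p (k + 1) + p (k + 1) * z) ∈ Set.Icc (0 : ℝ) 1 := by
    intro k z hz
    obtain ⟨hp0, hp1⟩ := hp01 (k + 1)
    constructor
    · nlinarith [mul_nonneg hp0.le hz.1]
    · nlinarith [mul_le_mul_of_nonneg_left hz.2 hp0.le]
  -- inner part: compose g's
  have inner : ∀ j, j ≤ u - t → ∀ z ∈ Set.Icc (0 : ℝ) 1,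
      pgfCompSeq F (t + j) z = pgfCompSeq F t (g^[j] z) ∧ g^[j] z ∈ Set.Icc (0 : ℝ) 1 := by
    intro j
    induction j with
    | zero => intro _ z hz; simp [hz]
    | succ n ih =>
      intro hle z hz
      have hn : n ≤ u - t := by omega
      have hpval : p (t + n + 1) = 1 / m := by
        apply hpk <;> omega
      have hFg : F (t + n) z = g z := by
        show f (1 - p (t + n + 1) + p (t + n + 1) * z) = g z
        rw [hg z hz, hpval]
        congr 1
        ring
      have hgz : g z ∈ Set.Icc (0 : ℝ) 1 := hg01 z hz
      have step : pgfCompSeq F (t + (n + 1)) z = pgfCompSeq F (t + n) (F (t + n) z) := by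
        have : t + (n + 1) = (t + n) + 1 := by omega
        rw [this]
        rfl
      obtain ⟨ih1, ih2⟩ := ih hn (g z) hgz
      constructor
      · rw [step, hFg, ih1, Function.iterate_succ_apply]
      · rw [Function.iterate_succ_apply]
        exact ih2
  -- outer part: the product bound
  have prodpos : ∀ n : ℕ, 0 ≤ ∏ k ∈ Finset.Icc 1 n, (m * p k) := by
    intro n
    exact Finset.prod_nonneg fun k _ => mul_nonneg hm0.le (hp01 k).1.le
  have outer : ∀ n, ∀ z ∈ Set.Icc (0 : ℝ) 1,
      1 - pgfCompSeq F n z ≤ (∏ k ∈ Finset.Icc 1 n, (m * p k)) * (1 - z) := by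
    intro n
    induction n with
    | zero => intro z hz; simp [pgfCompSeq]
    | succ n ih =>
      intro z hz
      have harg := argF01 n z hz
      have hFz : F n z ∈ Set.Icc (0 : ℝ) 1 := hf01 _ harg
      have h1 : 1 - F n z ≤ m * p (n + 1) * (1 - z) := by
        have := key _ harg
        calc 1 - F n z ≤ m * (1 - (1 - p (n + 1) + p (n + 1) * z)) := this
          _ = m * p (n + 1) * (1 - z) := by ring
      have step : pgfCompSeq F (n + 1) z = pgfCompSeq F n (F n z) := rfl
      have h2 := ih (F n z) hFz
      have h3 : (∏ k ∈ Finset.Icc 1 n, (m * p k)) * (1 - F n z) ≤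
          (∏ k ∈ Finset.Icc 1 n, (m * p k)) * (m * p (n + 1) * (1 - z)) :=
        mul_le_mul_of_nonneg_left h1 (prodpos n)
      have h4 : (∏ k ∈ Finset.Icc 1 (n + 1), (m * p k)) =
          (∏ k ∈ Finset.Icc 1 n, (m * p k)) * (m * p (n + 1)) :=
        Finset.prod_Icc_succ_top (by omega) _
      rw [step, h4]
      calc 1 - pgfCompSeq F n (F n z) ≤ (∏ k ∈ Finset.Icc 1 n, (m * p k)) * (1 - F n z) := h2
        _ ≤ (∏ k ∈ Finset.Icc 1 n, (m * p k)) * (m * p (n + 1) * (1 - z)) := h3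
        _ = (∏ k ∈ Finset.Icc 1 n, (m * p k)) * (m * p (n + 1)) * (1 - z) := by ring
  -- combine
  have h0 : (0 : ℝ) ∈ Set.Icc (0 : ℝ) 1 := by constructor <;> norm_num
  obtain ⟨e1, e2⟩ := inner (u - t) (le_refl _) 0 h0
  have hu : t + (u - t) = u := by omega
  rw [hu] at e1
  rw [e1]
  exact outer t _ e2
end
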